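/- arXiv:1411.2759 — 5 statements merged into one kernel-verified Lean document; each statement's English description precedes it below -/
import Mathlib

section
/- Let M be a compact subset of Ω with π(M) = S¹, let φ_M : S¹ → 2^I be the map θ ↦ M^θ (which is upper semicontinuous for the Hausdorff metric on nonempty compact subsets of I), and let G_M be its residual set of continuity points. Then for every residual set G ⊆ G_M one has M^c = closure(M ∩ π⁻¹(G)). Moreover, M ∩ π⁻¹(G) = M^c ∩ π⁻¹(G) and (M^c)^c = M^c. -/
open Dynamics Set

noncomputable section

/-- The circle `S¹ = ℝ/ℤ`. -/
abbrev S1 : Type := AddCircle (1 : ℝ)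

/-- The unit interval `I = [0,1]` as a type. -/
abbrev II : Type := Set.Icc (0 : ℝ) 1

/-- The cylinder `Ω = S¹ × I`. -/
abbrev Cyl : Type := S1 × II

/-- The fiber of a subset of the cylinder over `θ ∈ S¹`. -/
def fiber (A : Set Cyl) (θ : S1) : Set II := {x : II | (θ, x) ∈ A}

/-- `M_A θ = max {x ∈ I : (θ, x) ∈ A}`. -/
def MA (A : Set Cyl) (θ : S1) : ℝ := sSup (Subtype.val '' fiber A θ)

/-- `m_A θ = min {x ∈ I : (θ, x) ∈ A}`. -/
def mA (A : Set Cyl) (θ : S1) : ℝ := sInf (Subtype.val '' fiber A θ)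

/-- A strip: a closed set projecting onto all of `S¹` whose fibers over a residual
set of `θ`'s are (possibly degenerate) nonempty closed intervals. -/
def IsStrip (A : Set Cyl) : Prop :=
  IsClosed A ∧ (∀ θ : S1, ∃ x : II, (θ, x) ∈ A) ∧
    ∃ G ∈ residual S1, ∀ θ ∈ G, ∃ a b : II, a ≤ b ∧ fiber A θ = Set.Icc a b

/-- `A < B` for strips. -/
def stripLT (A B : Set Cyl) : Prop := ∃ G ∈ residual S1, ∀ θ ∈ G, MA A θ < mA B θ

/-- `A ≤ B` for strips. -/
def stripLE (A B : Set Cyl) : Prop := ∃ G ∈ residual S1, ∀ θ ∈ G, MA A θ ≤ mA B θ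

/-- Two strips are ordered if `A < B` or `B < A`. -/
def StripOrdered (A B : Set Cyl) : Prop := stripLT A B ∨ stripLT B A

/-- Two strips are weakly ordered if `A ≤ B` or `B ≤ A`. -/
def StripWeaklyOrdered (A B : Set Cyl) : Prop := stripLE A B ∨ stripLE B A

/-- The class `S(Ω)` of quasiperiodically forced skew-products on the cylinder:
continuous maps whose first coordinate is an irrational rotation. -/
def IsQPF (F : Cyl → Cyl) : Prop :=
  Continuous F ∧ ∃ ω : ℝ, Irrational ω ∧ ∀ p : Cyl, (F p).1 = p.1 + (ω : S1)

/-- `B` is an `n`-periodic strip of `F`: `F^n(B) = B` and the iterates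
`B, F(B), …, F^{n-1}(B)` are pairwise disjoint and pairwise ordered. -/
def IsPeriodicStripOrbit (F : Cyl → Cyl) (n : ℕ) (B : Set Cyl) : Prop :=
  IsStrip B ∧ F^[n] '' B = B ∧
    ∀ i j : ℕ, i < j → j < n →
      Disjoint (F^[i] '' B) (F^[j] '' B) ∧ StripOrdered (F^[i] '' B) (F^[j] '' B)

/-- A cyclic permutation: the (forward) orbit of any point is everything. -/
def IsCyclicPerm {n : ℕ} (τ : Equiv.Perm (Fin n)) : Prop :=
  ∀ i j : Fin n, ∃ k : ℕ, (τ ^ k) i = j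

/-- `F` exhibits the strips pattern `τ`: it has a periodic orbit of strips,
spatially labelled, moved around according to `τ`. -/
def ExhibitsStripPattern (F : Cyl → Cyl) {n : ℕ} (τ : Equiv.Perm (Fin n)) : Prop :=
  ∃ B : Fin n → Set Cyl,
    (∀ i, IsStrip (B i)) ∧
    (∀ i j : Fin n, i < j → stripLT (B i) (B j)) ∧
    (Pairwise fun i j => Disjoint (B i) (B j)) ∧
    (∀ i, F '' B i = B (τ i))

/-- A continuous interval map has a periodic orbit with interval pattern `τ`. -/
def HasIntervalPattern (f : II → II) {n : ℕ} (τ : Equiv.Perm (Fin n)) : Prop :=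
  ∃ p : Fin n → II, StrictMono p ∧ ∀ i, f (p i) = p (τ i)

/-- `τ` forces `ν` as interval patterns. -/
def ForcesI {n m : ℕ} (τ : Equiv.Perm (Fin n)) (ν : Equiv.Perm (Fin m)) : Prop :=
  ∀ f : II → II, Continuous f → HasIntervalPattern f τ → HasIntervalPattern f ν

/-- `τ` forces `ν` in `Ω`. -/
def ForcesOmega {n m : ℕ} (τ : Equiv.Perm (Fin n)) (ν : Equiv.Perm (Fin m)) : Prop :=
  ∀ F : Cyl → Cyl, IsQPF F → ExhibitsStripPattern F τ → ExhibitsStripPattern F ν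

/-- `p >_Sh q` in the Sharkovskiĭ ordering. -/
def SharkGT (p q : ℕ) : Prop :=
  ∃ i m j l : ℕ, Odd m ∧ Odd l ∧ p = 2 ^ i * m ∧ q = 2 ^ j * l ∧
    ((m = 1 ∧ l = 1 ∧ j < i) ∨ (1 < m ∧ l = 1) ∨
      (1 < m ∧ 1 < l ∧ (i < j ∨ (i = j ∧ m < l))))

/-- The core of a subset of the cylinder. -/
def core (M : Set Cyl) : Set Cyl :=
  ⋂ (G : Set S1) (_ : G ∈ residual S1), closure (M ∩ Prod.fst ⁻¹' G)

/-- A band is a strip equal to its core. -/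
def IsBand (A : Set Cyl) : Prop := IsStrip A ∧ core A = A

/-- Continuity points of a real-valued function on the circle. -/
def contPts (g : S1 → ℝ) : Set S1 := {θ | ContinuousAt g θ}

/-- The top cover `A⁺` of a strip: the closure of the graph of `M_A` restricted to its
residual set of continuity points. -/
def topCover (A : Set Cyl) : Set Cyl :=
  closure {p : Cyl | p.1 ∈ contPts (MA A) ∧ (p.2 : ℝ) = MA A p.1}

/-- The bottom cover `A⁻` of a strip. -/
def botCover (A : Set Cyl) : Set Cyl :=
  closure {p : Cyl | p.1 ∈ contPts (mA A) ∧ (p.2 : ℝ) = mA A p.1}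

/-- `A` positively `F`-covers `B`. -/
def FCoversPos (F : Cyl → Cyl) (A B : Set Cyl) : Prop :=
  stripLE (F '' botCover A) (botCover B) ∧ stripLE (topCover B) (F '' topCover A)

/-- `A` negatively `F`-covers `B`. -/
def FCoversNeg (F : Cyl → Cyl) (A B : Set Cyl) : Prop :=
  stripLE (topCover B) (F '' botCover A) ∧ stripLE (F '' topCover A) (botCover B)

/-- `A` `F`-covers `B`. -/
def FCovers (F : Cyl → Cyl) (A B : Set Cyl) : Prop := FCoversPos F A B ∨ FCoversNeg F A B

/-- An `s`-horseshoe `(J, D)` for `F`. -/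
def IsHorseshoe (F : Cyl → Cyl) (s : ℕ) (J : Set Cyl) (D : Finset (Set Cyl)) : Prop :=
  2 ≤ s ∧ D.card = s ∧ IsBand J ∧
    (∀ L ∈ D, IsBand L ∧ (interior L).Nonempty ∧ FCovers F L J) ∧
    (∀ L ∈ D, ∀ L' ∈ D, L ≠ L' → StripWeaklyOrdered L L')

/-- Topological entropy (cover entropy of the whole space). -/
def hTop {X : Type} [UniformSpace X] (F : X → X) : EReal := coverEntropy F Set.univ

/-- A pseudo-curve: the closure of the graph of a continuous map from a residual
subset of the circle to the interval. -/
def IsPseudoCurve (A : Set Cyl) : Prop :=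
  ∃ G ∈ residual S1, ∃ φ : S1 → II, Continuous (G.restrict φ) ∧
    A = closure {p : Cyl | p.1 ∈ G ∧ p.2 = φ p.1}

/-- The band `E_{AB}` between two pseudo-curves `A < B`. -/
def bandBetween (A B : Set Cyl) : Set Cyl :=
  closure {p : Cyl | p.1 ∈ contPts (MA A) ∧ p.1 ∈ contPts (mA B) ∧
    MA A p.1 < (p.2 : ℝ) ∧ (p.2 : ℝ) < mA B p.1}

/-- `f` is affine on the subinterval `[a, b]` of `I`. -/
def AffineOnIcc (f : II → II) (a b : II) : Prop :=
  ∀ x : II, a ≤ x → x ≤ b →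
    ((b : ℝ) - (a : ℝ)) * ((f x : ℝ) - (f a : ℝ)) =
      ((x : ℝ) - (a : ℝ)) * ((f b : ℝ) - (f a : ℝ))

/-- `f` is the `P`-linear (connect-the-dots) map over the points `p 0 < p 1 < … < p n`:
continuous, affine on each `[p i, p (i+1)]` and constant on both components of
`I ∖ [p 0, p n]`. -/
def IsPLinear {n : ℕ} (f : II → II) (p : Fin (n + 1) → II) : Prop :=
  Continuous f ∧
    (∀ k : Fin n, AffineOnIcc f (p k.castSucc) (p k.succ)) ∧
    (∀ x : II, x ≤ p 0 → f x = f (p 0)) ∧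
    (∀ x : II, p (Fin.last n) ≤ x → f x = f (p (Fin.last n)))

/-- Signed arrow between basic intervals `J_k = [p k, p (k+1)]` and `J_l` in the
`P`-signed Markov graph of `f` (`true` = positive covering, `false` = negative). -/
def IArrow {n : ℕ} (f : II → II) (p : Fin (n + 1) → II) (s : Bool) (k l : Fin n) : Prop :=
  if s then
    (f (p k.castSucc) : ℝ) ≤ (p l.castSucc : ℝ) ∧ (p l.succ : ℝ) ≤ (f (p k.succ) : ℝ)
  else
    (f (p k.succ) : ℝ) ≤ (p l.castSucc : ℝ) ∧ (p l.succ : ℝ) ≤ (f (p k.castSucc) : ℝ)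

/-- A loop of length `m` in the `P`-signed Markov graph of `f`, encoded as `m`-periodic
sequences of vertices (basic intervals) and signs. -/
def IsILoop {n : ℕ} (f : II → II) (p : Fin (n + 1) → II) (m : ℕ)
    (v : ℕ → Fin n) (s : ℕ → Bool) : Prop :=
  0 < m ∧ (∀ i, v (i + m) = v i) ∧ (∀ i, s (i + m) = s i) ∧
    ∀ i, IArrow f p (s i) (v i) (v (i + 1))

/-- A periodic point `x` of (exact) period `m` is associated to the loop with vertex
sequence `v` if `f^i(x) ∈ J_{v i}` for all `i`. -/
def IAssocPt {n : ℕ} (f : II → II) (p : Fin (n + 1) → II) (m : ℕ)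
    (x : II) (v : ℕ → Fin n) : Prop :=
  f^[m] x = x ∧ (∀ i : ℕ, 0 < i → i < m → f^[i] x ≠ x) ∧
    ∀ i : ℕ, p (v i).castSucc ≤ f^[i] x ∧ f^[i] x ≤ p (v i).succ

/-- The sign (`true` = `+`) of the initial segment of length `k` of a signed path. -/
def signAt (s : ℕ → Bool) (k : ℕ) : Bool :=
  decide (Even ((Finset.range k).filter (fun i => s i = false)).card)

/-- Lexicographic ordering of (infinite liftings of) signed paths, comparing the vertex
sequences `v` and `w`; at the first difference the comparison is reversed iff the sign
of the common initial segment is negative. -/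
def seqLT {n : ℕ} (v : ℕ → Fin n) (s : ℕ → Bool) (w : ℕ → Fin n) : Prop :=
  ∃ k : ℕ, (∀ i < k, v i = w i) ∧ v k ≠ w k ∧ (v k < w k ↔ signAt s k = true)

/-- The shift of a sequence by `i`. -/
def shiftSeq {α : Type} (v : ℕ → α) (i : ℕ) : ℕ → α := fun j => v (i + j)

/-- A loop of length `m` (given by `m`-periodic sequences) is simple if it is not the
repetition of a shorter loop. -/
def SimpleLoop {α β : Type} (m : ℕ) (v : ℕ → α) (s : ℕ → β) : Prop :=
  ¬ ∃ d : ℕ, 0 < d ∧ d < m ∧ d ∣ m ∧ (∀ i, v (i + d) = v i) ∧ (∀ i, s (i + d) = s i)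

/-- The basic bands associated to a (spatially labelled) periodic orbit of strips
`B 0 < B 1 < … < B n`: `I_{B_k B_{k+1}} = E_{(B_k)⁺ (B_{k+1})⁻}`. -/
def basicBand {n : ℕ} (B : Fin (n + 1) → Set Cyl) (k : Fin n) : Set Cyl :=
  bandBetween (topCover (B k.castSucc)) (botCover (B k.succ))

/-- Signed arrow between bands in a signed Markov graph of `F`. -/
def BArrow (F : Cyl → Cyl) (s : Bool) (A B : Set Cyl) : Prop :=
  if s then FCoversPos F A B else FCoversNeg F A B

/-- A loop of length `m` in the signed Markov graph of `F` over the basic bands of the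
periodic orbit of strips `B`. -/
def IsBLoop (F : Cyl → Cyl) {n : ℕ} (B : Fin (n + 1) → Set Cyl) (m : ℕ)
    (v : ℕ → Fin n) (s : ℕ → Bool) : Prop :=
  0 < m ∧ (∀ i, v (i + m) = v i) ∧ (∀ i, s (i + m) = s i) ∧
    ∀ i, BArrow F (s i) (basicBand B (v i)) (basicBand B (v (i + 1)))

/-- Equality of patterns given as cyclic permutations of possibly different index sets. -/
def PatternEqNat {a b : ℕ} (τ : Equiv.Perm (Fin a)) (ν : Equiv.Perm (Fin b)) : Prop :=
  a = b ∧ ∀ (i : Fin a) (j : Fin b), (i : ℕ) = (j : ℕ) → ((τ i : ℕ) = (ν j : ℕ))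

/-- The entropy of a strips pattern: the infimum of the entropies of the maps in `S(Ω)`
exhibiting it. -/
def patternEntropy {n : ℕ} (τ : Equiv.Perm (Fin n)) : EReal :=
  sInf {e : EReal | ∃ F : Cyl → Cyl, IsQPF F ∧ ExhibitsStripPattern F τ ∧ e = hTop F}

end

/-- Key approximation lemma: a point of `M` over a continuity point of the fiber map
lies in the closure of the restriction of `M` over any residual set. -/
lemma key_lemma (M : Set Cyl)
    (φ : S1 → TopologicalSpace.NonemptyCompacts II)
    (hφ : ∀ θ : S1, (φ θ : Set II) = fiber M θ)
    (θ : S1) (hθ : ContinuousAt φ θ) (x : II) (hx : (θ, x) ∈ M)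
    (H : Set S1) (hH : H ∈ residual S1) :
    (θ, x) ∈ closure (M ∩ Prod.fst ⁻¹' H) := by
  rw [Metric.mem_closure_iff]
  intro ε hε
  obtain ⟨δ, hδ, hcont⟩ := Metric.continuousAt_iff.mp hθ ε hε
  obtain ⟨θ', hθ'H, hθ'b⟩ := (dense_of_mem_residual hH).exists_mem_open Metric.isOpen_ball
    ⟨θ, Metric.mem_ball_self (lt_min hδ hε)⟩
  rw [Metric.mem_ball, lt_min_iff] at hθ'b
  have hd : Metric.hausdorffDist (φ θ : Set II) (φ θ') < ε := by
    have := hcont hθ'b.1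
    rw [Metric.NonemptyCompacts.dist_eq] at this
    rwa [Metric.hausdorffDist_comm]
  have hxφ : x ∈ (φ θ : Set II) := by rw [hφ]; exact hx
  obtain ⟨x', hx'φ, hxx'⟩ := Metric.exists_dist_lt_of_hausdorffDist_lt hxφ hd
    (Metric.hausdorffEdist_ne_top_of_nonempty_of_bounded (φ θ).nonempty (φ θ').nonempty
      (φ θ).isCompact.isBounded (φ θ').isCompact.isBounded)
  refine ⟨(θ', x'), ⟨?_, hθ'H⟩, ?_⟩
  · have : x' ∈ fiber M θ' := by rw [← hφ]; exact hx'φ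
    exact this
  · rw [Prod.dist_eq]
    exact max_lt (by simpa [dist_comm] using hθ'b.2) hxx'

/-- the core of a compact set projecting onto `S¹` equals the closure of
its restriction over any residual set of continuity points of `θ ↦ M^θ`. -/
theorem core_eq_closure_over_residual (M : Set Cyl) (hM : IsCompact M)
    (hproj : ∀ θ : S1, ∃ x : II, (θ, x) ∈ M)
    (φ : S1 → TopologicalSpace.NonemptyCompacts II)
    (hφ : ∀ θ : S1, (φ θ : Set II) = fiber M θ)
    (G : Set S1) (hG : G ∈ residual S1)
    (hGsub : ∀ θ ∈ G, ContinuousAt φ θ) :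
    core M = closure (M ∩ Prod.fst ⁻¹' G) ∧
    M ∩ Prod.fst ⁻¹' G = core M ∩ Prod.fst ⁻¹' G ∧
    core (core M) = core M := by
  have hMclosed : IsClosed M := hM.isClosed
  have hkey : ∀ H ∈ residual S1, M ∩ Prod.fst ⁻¹' G ⊆ closure (M ∩ Prod.fst ⁻¹' H) := by
    rintro H hH ⟨θ, x⟩ ⟨hxM, hθG⟩
    exact key_lemma M φ hφ θ (hGsub θ hθG) x hxM H hH
  have hcoreM : core M = closure (M ∩ Prod.fst ⁻¹' G) := by
    apply subset_antisymm
    · exact Set.biInter_subset_of_mem hG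
    · exact Set.subset_iInter₂ fun H hH => closure_minimal (hkey H hH) isClosed_closure
  have hsubM : core M ⊆ M := by
    rw [hcoreM]
    exact (closure_mono Set.inter_subset_left).trans hMclosed.closure_eq.subset
  have hMG : M ∩ Prod.fst ⁻¹' G ⊆ core M := hcoreM ▸ subset_closure
  have hclosed_core : IsClosed (core M) :=
    isClosed_iInter fun _ => isClosed_iInter fun _ => isClosed_closure
  refine ⟨hcoreM, ?_, ?_⟩
  · exact subset_antisymm (fun p hp => ⟨hMG hp, hp.2⟩) (fun p hp => ⟨hsubM hp.1, hp.2⟩)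
  · apply subset_antisymm
    · have h1 : core (core M) ⊆ closure (core M ∩ Prod.fst ⁻¹' (Set.univ : Set S1)) :=
        Set.biInter_subset_of_mem Filter.univ_mem
      simpa [hclosed_core.closure_eq] using h1
    · refine Set.subset_iInter₂ fun H hH => ?_
      nth_rewrite 1 [hcoreM]
      refine closure_minimal (fun p hp => ?_) isClosed_closure
      have hGH : G ∩ H ∈ residual S1 := Filter.inter_mem hG hH
      have h2 : p ∈ closure (M ∩ Prod.fst ⁻¹' (G ∩ H)) := by
        obtain ⟨θ, x⟩ := p
        exact key_lemma M φ hφ θ (hGsub θ hp.2) x hp.1 _ hGH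
      refine closure_mono (fun q hq => ?_) h2
      exact ⟨hMG ⟨hq.1, hq.2.1⟩, hq.2.2⟩
end

section
/- Let A and B be pseudo-curves in Ω with A < B, and let E_AB be the band between A and B. Then the bottom cover of E_AB equals A and the top cover of E_AB equals B; moreover, (E_AB)^θ = {θ} × [M_A(θ), m_B(θ)] for every θ ∈ G_{M_A} ∩ G_{m_B}. -/
open Dynamics Set

section BandHelpers

open Topology Filter Set Metric

lemma isClosed_fiber {A : Set Cyl} (hA : IsClosed A) (θ : S1) : IsClosed (fiber A θ) :=
  hA.preimage (Continuous.prodMk_right θ)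

lemma val_fiber_subset (A : Set Cyl) (θ : S1) :
    Subtype.val '' fiber A θ ⊆ Set.Icc (0:ℝ) 1 := by
  rintro x ⟨y, -, rfl⟩; exact y.2

lemma isCompact_val_fiber {A : Set Cyl} (hA : IsClosed A) (θ : S1) :
    IsCompact (Subtype.val '' fiber A θ) :=
  ((isClosed_fiber hA θ).isCompact).image continuous_subtype_val

lemma MA_mem {A : Set Cyl} (hA : IsClosed A) {θ : S1} (h : (fiber A θ).Nonempty) :
    MA A θ ∈ Subtype.val '' fiber A θ :=
  (isCompact_val_fiber hA θ).sSup_mem (h.image _)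

lemma mA_mem {A : Set Cyl} (hA : IsClosed A) {θ : S1} (h : (fiber A θ).Nonempty) :
    mA A θ ∈ Subtype.val '' fiber A θ :=
  (isCompact_val_fiber hA θ).sInf_mem (h.image _)

lemma le_MA {A : Set Cyl} {θ : S1} {x : ℝ} (hx : x ∈ Subtype.val '' fiber A θ) :
    x ≤ MA A θ :=
  le_csSup (bddAbove_Icc.mono (val_fiber_subset A θ)) hx

lemma mA_le {A : Set Cyl} {θ : S1} {x : ℝ} (hx : x ∈ Subtype.val '' fiber A θ) :
    mA A θ ≤ x :=
  csInf_le (bddBelow_Icc.mono (val_fiber_subset A θ)) hx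

lemma MA_mem_Icc {A : Set Cyl} (hA : IsClosed A) {θ : S1} (h : (fiber A θ).Nonempty) :
    MA A θ ∈ Set.Icc (0:ℝ) 1 := val_fiber_subset A θ (MA_mem hA h)

lemma mA_mem_Icc {A : Set Cyl} (hA : IsClosed A) {θ : S1} (h : (fiber A θ).Nonempty) :
    mA A θ ∈ Set.Icc (0:ℝ) 1 := val_fiber_subset A θ (mA_mem hA h)

lemma fiber_nonempty_of_dense {C : Set Cyl} (hC : IsClosed C) {D : Set S1} (hD : Dense D)
    (h : ∀ θ ∈ D, (fiber C θ).Nonempty) (θ : S1) : (fiber C θ).Nonempty := by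
  have hcl : IsClosed (Prod.fst '' C) := isClosedMap_fst_of_compactSpace _ hC
  have hsub : D ⊆ Prod.fst '' C := by
    intro θ' hθ'
    obtain ⟨x, hx⟩ := h θ' hθ'
    exact ⟨(θ', x), hx, rfl⟩
  have hθ : θ ∈ Prod.fst '' C := by
    have : θ ∈ closure D := hD θ
    have := (closure_mono hsub) this
    rwa [hcl.closure_eq] at this
  obtain ⟨p, hp, hp1⟩ := hθ
  refine ⟨p.2, ?_⟩
  have : (θ, p.2) = p := by rw [← hp1]
  simpa [fiber, this] using hp

/-- Workhorse: if over a dense-in-`U` set of base points the closed set `C` has a fiber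
point with value in the closed set `P`, then it has one over every point of `U`. -/
lemma exists_fiber_mem {C : Set Cyl} (hC : IsClosed C) {D U : Set S1} (hD : Dense D)
    (hU : IsOpen U) {P : Set ℝ} (hP : IsClosed P)
    (h : ∀ θ ∈ D ∩ U, ∃ x : II, (θ, x) ∈ C ∧ (x:ℝ) ∈ P)
    {θ : S1} (hθ : θ ∈ U) : ∃ x : II, (θ, x) ∈ C ∧ (x:ℝ) ∈ P := by
  set C' : Set Cyl := C ∩ {p : Cyl | (p.2:ℝ) ∈ P} with hC'def
  have hC'cl : IsClosed C' :=
    hC.inter (hP.preimage (continuous_subtype_val.comp continuous_snd))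
  have hcl : IsClosed (Prod.fst '' C') := isClosedMap_fst_of_compactSpace _ hC'cl
  have hsub : U ∩ D ⊆ Prod.fst '' C' := by
    rintro θ' ⟨h2, h1⟩
    obtain ⟨x, hx1, hx2⟩ := h θ' ⟨h1, h2⟩
    exact ⟨(θ', x), ⟨hx1, hx2⟩, rfl⟩
  have hθ' : θ ∈ Prod.fst '' C' := by
    have h1 : θ ∈ closure (U ∩ D) := hD.open_subset_closure_inter hU hθ
    have := (closure_mono hsub) h1
    rwa [hcl.closure_eq] at this
  obtain ⟨p, ⟨hp1, hp2⟩, hp3⟩ := hθ'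
  refine ⟨p.2, ?_, hp2⟩
  have : (θ, p.2) = p := by rw [← hp3]
  rwa [this]

end BandHelpers
section PCHelpers
open Topology Filter Set Metric

/-- All basic properties of a pseudo-curve extracted at once. -/
lemma pc_spec {A : Set Cyl} (hA : IsPseudoCurve A) :
    ∃ G ∈ residual S1, ∃ φ : S1 → II,
      IsClosed A ∧
      A = closure {p : Cyl | p.1 ∈ G ∧ p.2 = φ p.1} ∧
      (∀ θ, (fiber A θ).Nonempty) ∧
      (∀ θ ∈ G, (θ, φ θ) ∈ A) ∧
      (∀ θ ∈ G, ∀ ε > 0, ∃ U ∈ 𝓝 θ, ∀ p ∈ A, p.1 ∈ U → |(p.2:ℝ) - (φ θ:ℝ)| ≤ ε) ∧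
      (∀ G' : Set S1, G' ⊆ G → Dense G' →
        A ⊆ closure {p : Cyl | p.1 ∈ G' ∧ p.2 = φ p.1}) := by
  obtain ⟨G, hG, φ, hφ, hAeq⟩ := hA
  have hGdense : Dense G := dense_of_mem_residual hG
  have hφon : ContinuousOn φ G := continuousOn_iff_continuous_restrict.2 hφ
  have hAcl : IsClosed A := hAeq ▸ isClosed_closure
  have hgr : ∀ θ ∈ G, (θ, φ θ) ∈ A := fun θ hθ => hAeq ▸ subset_closure ⟨hθ, rfl⟩
  -- the key estimate
  have hest : ∀ θ ∈ G, ∀ ε > 0, ∃ U ∈ 𝓝 θ, ∀ p ∈ A, p.1 ∈ U → |(p.2:ℝ) - (φ θ:ℝ)| ≤ ε := by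
    intro θ hθ ε hε
    have hc : ContinuousWithinAt φ G θ := hφon θ hθ
    have hb : {y : II | dist y (φ θ) < ε} ∈ 𝓝 (φ θ) := Metric.ball_mem_nhds _ hε
    have hmem : {θ' | dist (φ θ') (φ θ) < ε} ∈ 𝓝[G] θ := hc hb
    obtain ⟨O, hOopen, hθO, hOsub⟩ := mem_nhdsWithin.1 hmem
    refine ⟨O, hOopen.mem_nhds hθO, ?_⟩
    intro p hp hpU
    by_contra habs
    push_neg at habs
    have hT : (O ×ˢ {y : II | ε < |(y:ℝ) - (φ θ:ℝ)|}) ∈ 𝓝 p := by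
      have hopen : IsOpen {y : II | ε < |(y:ℝ) - (φ θ:ℝ)|} :=
        isOpen_lt continuous_const (by fun_prop)
      exact prod_mem_nhds (hOopen.mem_nhds hpU) (hopen.mem_nhds habs)
    rw [hAeq] at hp
    obtain ⟨q, ⟨hq1, hq2⟩, hq3, hq4⟩ := mem_closure_iff_nhds.1 hp _ hT
    have hd : dist (φ q.1) (φ θ) < ε := hOsub ⟨hq1, hq3⟩
    rw [Subtype.dist_eq, Real.dist_eq] at hd
    rw [hq4] at hq2
    exact absurd hq2 (not_lt.2 hd.le)
  -- dense graph subsets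
  have hsubG : ∀ G' : Set S1, G' ⊆ G → Dense G' →
      A ⊆ closure {p : Cyl | p.1 ∈ G' ∧ p.2 = φ p.1} := by
    intro G' hG'sub hG'dense
    rw [hAeq]
    refine closure_minimal ?_ isClosed_closure
    rintro ⟨θ, x⟩ ⟨hθ, hx⟩
    rw [mem_closure_iff_nhds]
    intro T hT
    rw [mem_nhds_prod_iff] at hT
    obtain ⟨U, hU, V, hV, hUV⟩ := hT
    have hc : ContinuousWithinAt φ G θ := hφon θ hθ
    have hx' : x = φ θ := hx
    have hmem : {θ' | φ θ' ∈ V} ∈ 𝓝[G] θ := hc (hx' ▸ hV)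
    obtain ⟨O, hOopen, hθO, hOsub⟩ := mem_nhdsWithin.1 hmem
    obtain ⟨θ', hθ'G', hθ'mem⟩ :=
      hG'dense.inter_nhds_nonempty (inter_mem hU (hOopen.mem_nhds hθO))
    refine ⟨(θ', φ θ'), hUV ⟨hθ'mem.1, hOsub ⟨hθ'mem.2, hG'sub hθ'G'⟩⟩, hθ'G', rfl⟩
  -- nonempty fibers
  have hne : ∀ θ, (fiber A θ).Nonempty :=
    fiber_nonempty_of_dense hAcl hGdense (fun θ hθ => ⟨φ θ, hgr θ hθ⟩)
  exact ⟨G, hG, φ, hAcl, hAeq, hne, hgr, hest, hsubG⟩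

/-- Continuity and identification of `MA`/`mA` at the good points of a pseudo-curve. -/
lemma pc_MA_cont {A : Set Cyl} {G : Set S1} {φ : S1 → II} (hAcl : IsClosed A)
    (hne : ∀ θ, (fiber A θ).Nonempty)
    (hest : ∀ θ ∈ G, ∀ ε > 0, ∃ U ∈ 𝓝 θ, ∀ p ∈ A, p.1 ∈ U → |(p.2:ℝ) - (φ θ:ℝ)| ≤ ε) :
    ∀ θ ∈ G, MA A θ = φ θ ∧ mA A θ = φ θ ∧
      ContinuousAt (MA A) θ ∧ ContinuousAt (mA A) θ := by
  intro θ hθ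
  have key : ∀ ε > 0, ∃ U ∈ 𝓝 θ, ∀ θ' ∈ U,
      |MA A θ' - (φ θ:ℝ)| ≤ ε ∧ |mA A θ' - (φ θ:ℝ)| ≤ ε := by
    intro ε hε
    obtain ⟨U, hU, hUp⟩ := hest θ hθ ε hε
    refine ⟨U, hU, fun θ' hθ' => ?_⟩
    constructor
    · obtain ⟨y, hy, hyval⟩ := MA_mem hAcl (hne θ')
      have := hUp (θ', y) hy hθ'
      rwa [hyval] at this
    · obtain ⟨y, hy, hyval⟩ := mA_mem hAcl (hne θ')
      have := hUp (θ', y) hy hθ'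
      rwa [hyval] at this
  have hMAeq : MA A θ = (φ θ:ℝ) := by
    refine eq_of_forall_dist_le fun ε hε => ?_
    obtain ⟨U, hU, hUp⟩ := key ε hε
    have := (hUp θ (mem_of_mem_nhds hU)).1
    rwa [Real.dist_eq]
  have hmAeq : mA A θ = (φ θ:ℝ) := by
    refine eq_of_forall_dist_le fun ε hε => ?_
    obtain ⟨U, hU, hUp⟩ := key ε hε
    have := (hUp θ (mem_of_mem_nhds hU)).2
    rwa [Real.dist_eq]
  refine ⟨hMAeq, hmAeq, ?_, ?_⟩
  · rw [ContinuousAt, Metric.tendsto_nhds]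
    intro ε hε
    obtain ⟨U, hU, hUp⟩ := key (ε/2) (by linarith)
    filter_upwards [hU] with θ' hθ'
    have := (hUp θ' hθ').1
    rw [Real.dist_eq, hMAeq]
    linarith [abs_nonneg (MA A θ' - (φ θ:ℝ))]
  · rw [ContinuousAt, Metric.tendsto_nhds]
    intro ε hε
    obtain ⟨U, hU, hUp⟩ := key (ε/2) (by linarith)
    filter_upwards [hU] with θ' hθ'
    have := (hUp θ' hθ').2
    rw [Real.dist_eq, hmAeq]
    linarith [abs_nonneg (mA A θ' - (φ θ:ℝ))]

end PCHelpers
section MainProof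
open Topology Filter Set Metric

/-- The set whose closure is `bandBetween A B`. -/
def bandPre (A B : Set Cyl) : Set Cyl :=
  {p : Cyl | p.1 ∈ contPts (MA A) ∧ p.1 ∈ contPts (mA B) ∧
    MA A p.1 < (p.2 : ℝ) ∧ (p.2 : ℝ) < mA B p.1}

lemma bandBetween_eq (A B : Set Cyl) : bandBetween A B = closure (bandPre A B) := rfl

/-- covers and fibers of the band `E_{AB}` between pseudo-curves `A < B`. -/
theorem bandBetween_covers_and_fibers (A B : Set Cyl)
    (hA : IsPseudoCurve A) (hB : IsPseudoCurve B) (hAB : stripLT A B) :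
    botCover (bandBetween A B) = A ∧ topCover (bandBetween A B) = B ∧
    ∀ θ : S1, θ ∈ contPts (MA A) → θ ∈ contPts (mA B) →
      ∀ x : II, ((θ, x) ∈ bandBetween A B ↔ MA A θ ≤ (x : ℝ) ∧ (x : ℝ) ≤ mA B θ) := by
  classical
  obtain ⟨GA, hGA, φ, hAcl, hAeq, hAne, hAgr, hAest, hAsub⟩ := pc_spec hA
  obtain ⟨GB, hGB, ψ, hBcl, hBeq, hBne, hBgr, hBest, hBsub⟩ := pc_spec hB
  obtain ⟨G0, hG0, hlt0⟩ := hAB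
  have hApr := pc_MA_cont hAcl hAne hAest
  have hBpr := pc_MA_cont hBcl hBne hBest
  set G : Set S1 := GA ∩ GB ∩ G0 with hGdef
  have hGres : G ∈ residual S1 := inter_mem (inter_mem hGA hGB) hG0
  have hGdense : Dense G := dense_of_mem_residual hGres
  set E : Set Cyl := closure (bandPre A B) with hEdef
  have hEcl : IsClosed E := isClosed_closure
  have hGfacts : ∀ θ ∈ G, θ ∈ contPts (MA A) ∧ θ ∈ contPts (mA B) ∧ MA A θ < mA B θ := by
    rintro θ ⟨⟨h1, h2⟩, h3⟩
    exact ⟨(hApr θ h1).2.2.1, (hBpr θ h2).2.2.2, hlt0 θ h3⟩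
  -- Part 3: fiber characterization
  have hfib : ∀ θ : S1, θ ∈ contPts (MA A) → θ ∈ contPts (mA B) → ∀ x : II,
      ((θ, x) ∈ E ↔ MA A θ ≤ (x : ℝ) ∧ (x : ℝ) ≤ mA B θ) := by
    intro θ hcA hcB x
    have hcA' : ContinuousAt (MA A) θ := hcA
    have hcB' : ContinuousAt (mA B) θ := hcB
    constructor
    · intro hxE
      constructor
      · by_contra habs
        push_neg at habs
        have hc2 : ((x:ℝ) + MA A θ)/2 < MA A θ := by linarith
        have hU : {θ' | ((x:ℝ) + MA A θ)/2 < MA A θ'} ∈ 𝓝 θ := hcA' (Ioi_mem_nhds hc2)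
        have hV : {y : II | (y:ℝ) < ((x:ℝ) + MA A θ)/2} ∈ 𝓝 x :=
          (isOpen_lt continuous_subtype_val continuous_const).mem_nhds (by
            simp only [mem_setOf_eq]; linarith)
        obtain ⟨q, ⟨hq1, hq2⟩, hqS⟩ := mem_closure_iff_nhds.1 hxE _ (prod_mem_nhds hU hV)
        have h5 := hqS.2.2.1
        simp only [mem_setOf_eq] at hq1 hq2
        linarith
      · by_contra habs
        push_neg at habs
        have hc2 : mA B θ < (mA B θ + (x:ℝ))/2 := by linarith
        have hU : {θ' | mA B θ' < (mA B θ + (x:ℝ))/2} ∈ 𝓝 θ := hcB' (Iio_mem_nhds hc2)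
        have hV : {y : II | (mA B θ + (x:ℝ))/2 < (y:ℝ)} ∈ 𝓝 x :=
          (isOpen_lt continuous_const continuous_subtype_val).mem_nhds (by
            simp only [mem_setOf_eq]; linarith)
        obtain ⟨q, ⟨hq1, hq2⟩, hqS⟩ := mem_closure_iff_nhds.1 hxE _ (prod_mem_nhds hU hV)
        have h5 := hqS.2.2.2
        simp only [mem_setOf_eq] at hq1 hq2
        linarith
    · rintro ⟨h1, h2⟩
      rw [hEdef, mem_closure_iff_nhds]
      intro T hT
      rw [mem_nhds_prod_iff] at hT
      obtain ⟨U, hU, V, hV, hUV⟩ := hT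
      obtain ⟨ε, hε, hball⟩ := Metric.mem_nhds_iff.1 hV
      have hU1 : {θ' | dist (MA A θ') (MA A θ) < ε/2} ∈ 𝓝 θ :=
        Metric.tendsto_nhds.1 hcA' (ε/2) (by linarith)
      have hU2 : {θ' | dist (mA B θ') (mA B θ) < ε/2} ∈ 𝓝 θ :=
        Metric.tendsto_nhds.1 hcB' (ε/2) (by linarith)
      obtain ⟨θ', hθ'G, hθ'U0, hθ'U1, hθ'U2⟩ :=
        hGdense.inter_nhds_nonempty (inter_mem hU (inter_mem hU1 hU2))
      obtain ⟨hcA2, hcB2, hab⟩ := hGfacts θ' hθ'G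
      have ha0 : 0 ≤ MA A θ' := (MA_mem_Icc hAcl (hAne θ')).1
      have hb1 : mA B θ' ≤ 1 := (mA_mem_Icc hBcl (hBne θ')).2
      simp only [mem_setOf_eq, Real.dist_eq] at hθ'U1 hθ'U2
      have habs1 := abs_lt.1 hθ'U1
      have habs2 := abs_lt.1 hθ'U2
      have haux1 : MA A θ' < (x:ℝ) + ε/2 := by linarith
      have haux2 : (x:ℝ) - ε/2 < mA B θ' := by linarith
      set r := max (MA A θ') ((x:ℝ) - ε/2) with hr
      set t := min (mA B θ') ((x:ℝ) + ε/2) with ht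
      have hrt : r < t := max_lt (lt_min hab haux1) (lt_min haux2 (by linarith))
      set x' := (r + t)/2 with hx'
      have hrx : r < x' := by rw [hx']; linarith
      have hxt : x' < t := by rw [hx']; linarith
      have h0' : 0 ≤ x' := le_trans (le_trans ha0 (le_max_left _ _)) hrx.le
      have h1' : x' ≤ 1 := le_trans hxt.le (le_trans (min_le_left _ _) hb1)
      have hax : MA A θ' < x' := lt_of_le_of_lt (le_max_left _ _) hrx
      have hxb : x' < mA B θ' := lt_of_lt_of_le hxt (min_le_left _ _)
      have hd1 : (x:ℝ) - ε/2 ≤ r := le_max_right _ _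
      have hd2 : t ≤ (x:ℝ) + ε/2 := min_le_right _ _
      have hdist : |x' - (x:ℝ)| < ε := by
        rw [abs_lt]; constructor <;> linarith
      refine ⟨(θ', ⟨x', h0', h1'⟩), ⟨hUV ⟨hθ'U0, hball ?_⟩, hcA2, hcB2, hax, hxb⟩⟩
      rw [Metric.mem_ball, Subtype.dist_eq, Real.dist_eq]
      exact hdist
  -- canonical points of E over G
  have hEg : ∀ θ ∈ G, ∀ y : ℝ, MA A θ ≤ y → y ≤ mA B θ → ∀ (h0 : 0 ≤ y) (h1 : y ≤ 1),
      (θ, (⟨y, h0, h1⟩ : II)) ∈ E := by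
    intro θ hθ y hy1 hy2 h0 h1
    obtain ⟨hcA2, hcB2, _⟩ := hGfacts θ hθ
    exact (hfib θ hcA2 hcB2 _).2 ⟨hy1, hy2⟩
  have hEne : ∀ θ, (fiber E θ).Nonempty := by
    refine fiber_nonempty_of_dense hEcl hGdense (fun θ hθ => ?_)
    have hIcc := MA_mem_Icc hAcl (hAne θ)
    exact ⟨⟨MA A θ, hIcc⟩, hEg θ hθ _ le_rfl (hGfacts θ hθ).2.2.le hIcc.1 hIcc.2⟩
  -- mA E at points of G
  have hmE : ∀ θ₀ ∈ G, mA E θ₀ = MA A θ₀ ∧ ContinuousAt (mA E) θ₀ := by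
    intro θ₀ hθ₀
    obtain ⟨hcA0, hcB0, hab0⟩ := hGfacts θ₀ hθ₀
    have hcA0' : ContinuousAt (MA A) θ₀ := hcA0
    have key : ∀ ε > 0, ∃ U ∈ 𝓝 θ₀, ∀ θ' ∈ U, |mA E θ' - MA A θ₀| ≤ ε := by
      intro ε hε
      have hU2 : {θ' | dist (MA A θ') (MA A θ₀) < ε} ∈ 𝓝 θ₀ :=
        Metric.tendsto_nhds.1 hcA0' ε hε
      refine ⟨interior {θ' | dist (MA A θ') (MA A θ₀) < ε}, interior_mem_nhds.2 hU2,
        fun θ' hθ' => ?_⟩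
      have hlow : ∀ p ∈ E, p.1 ∈ interior {θ'' | dist (MA A θ'') (MA A θ₀) < ε} →
          MA A θ₀ - ε ≤ (p.2:ℝ) := by
        rintro ⟨p1, p2⟩ hp hpU
        by_contra habs
        push_neg at habs
        have hT : (interior {θ'' | dist (MA A θ'') (MA A θ₀) < ε} ×ˢ
            {y : II | (y:ℝ) < MA A θ₀ - ε}) ∈ 𝓝 ((p1, p2) : Cyl) :=
          prod_mem_nhds (isOpen_interior.mem_nhds hpU)
            ((isOpen_lt continuous_subtype_val continuous_const).mem_nhds habs)
        obtain ⟨q, ⟨hq1, hq2⟩, hqS⟩ := mem_closure_iff_nhds.1 hp _ hT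
        have hd : dist (MA A q.1) (MA A θ₀) < ε := by have h' := interior_subset hq1; simpa using h'
        rw [Real.dist_eq] at hd
        have h5 := hqS.2.2.1
        simp only [mem_setOf_eq] at hq2
        have h6 := abs_lt.1 hd
        linarith
      have hup : ∃ x : II, (θ', x) ∈ E ∧ (x:ℝ) ∈ Iic (MA A θ₀ + ε) := by
        refine exists_fiber_mem hEcl hGdense isOpen_interior isClosed_Iic ?_ hθ'
        rintro θ'' ⟨hθ''G, hθ''U⟩
        have hd : dist (MA A θ'') (MA A θ₀) < ε := by have h' := interior_subset hθ''U; simpa using h'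
        rw [Real.dist_eq] at hd
        have h6 := abs_lt.1 hd
        have hIcc := MA_mem_Icc hAcl (hAne θ'')
        refine ⟨⟨MA A θ'', hIcc⟩,
          hEg θ'' hθ''G _ le_rfl (hGfacts θ'' hθ''G).2.2.le hIcc.1 hIcc.2, ?_⟩
        simp only [mem_Iic]; linarith
      obtain ⟨xx, hxE, hxle⟩ := hup
      have hup' : mA E θ' ≤ MA A θ₀ + ε := le_trans (mA_le ⟨xx, hxE, rfl⟩) hxle
      have hlow' : MA A θ₀ - ε ≤ mA E θ' := by
        obtain ⟨y, hy, hyval⟩ := mA_mem hEcl (hEne θ')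
        have := hlow (θ', y) hy hθ'
        rwa [hyval] at this
      rw [abs_le]; exact ⟨by linarith, by linarith⟩
    have heq : mA E θ₀ = MA A θ₀ := by
      refine eq_of_forall_dist_le fun ε hε => ?_
      obtain ⟨U, hU, hUp⟩ := key ε hε
      have := hUp θ₀ (mem_of_mem_nhds hU)
      rwa [Real.dist_eq]
    refine ⟨heq, ?_⟩
    rw [ContinuousAt, Metric.tendsto_nhds]
    intro ε hε
    obtain ⟨U, hU, hUp⟩ := key (ε/2) (by linarith)
    filter_upwards [hU] with θ' hθ'
    have := hUp θ' hθ'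
    rw [Real.dist_eq, heq]
    linarith [abs_nonneg (mA E θ' - MA A θ₀)]
  -- MA E at points of G (mirror)
  have hME : ∀ θ₀ ∈ G, MA E θ₀ = mA B θ₀ ∧ ContinuousAt (MA E) θ₀ := by
    intro θ₀ hθ₀
    obtain ⟨hcA0, hcB0, hab0⟩ := hGfacts θ₀ hθ₀
    have hcB0' : ContinuousAt (mA B) θ₀ := hcB0
    have key : ∀ ε > 0, ∃ U ∈ 𝓝 θ₀, ∀ θ' ∈ U, |MA E θ' - mA B θ₀| ≤ ε := by
      intro ε hε
      have hU2 : {θ' | dist (mA B θ') (mA B θ₀) < ε} ∈ 𝓝 θ₀ :=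
        Metric.tendsto_nhds.1 hcB0' ε hε
      refine ⟨interior {θ' | dist (mA B θ') (mA B θ₀) < ε}, interior_mem_nhds.2 hU2,
        fun θ' hθ' => ?_⟩
      have hhigh : ∀ p ∈ E, p.1 ∈ interior {θ'' | dist (mA B θ'') (mA B θ₀) < ε} →
          (p.2:ℝ) ≤ mA B θ₀ + ε := by
        rintro ⟨p1, p2⟩ hp hpU
        by_contra habs
        push_neg at habs
        have hT : (interior {θ'' | dist (mA B θ'') (mA B θ₀) < ε} ×ˢ
            {y : II | mA B θ₀ + ε < (y:ℝ)}) ∈ 𝓝 ((p1, p2) : Cyl) :=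
          prod_mem_nhds (isOpen_interior.mem_nhds hpU)
            ((isOpen_lt continuous_const continuous_subtype_val).mem_nhds habs)
        obtain ⟨q, ⟨hq1, hq2⟩, hqS⟩ := mem_closure_iff_nhds.1 hp _ hT
        have hd : dist (mA B q.1) (mA B θ₀) < ε := by have h' := interior_subset hq1; simpa using h'
        rw [Real.dist_eq] at hd
        have h5 := hqS.2.2.2
        simp only [mem_setOf_eq] at hq2
        have h6 := abs_lt.1 hd
        linarith
      have hup : ∃ x : II, (θ', x) ∈ E ∧ (x:ℝ) ∈ Ici (mA B θ₀ - ε) := by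
        refine exists_fiber_mem hEcl hGdense isOpen_interior isClosed_Ici ?_ hθ'
        rintro θ'' ⟨hθ''G, hθ''U⟩
        have hd : dist (mA B θ'') (mA B θ₀) < ε := by have h' := interior_subset hθ''U; simpa using h'
        rw [Real.dist_eq] at hd
        have h6 := abs_lt.1 hd
        have hIcc := mA_mem_Icc hBcl (hBne θ'')
        refine ⟨⟨mA B θ'', hIcc⟩,
          hEg θ'' hθ''G _ (hGfacts θ'' hθ''G).2.2.le le_rfl hIcc.1 hIcc.2, ?_⟩
        simp only [mem_Ici]; linarith
      obtain ⟨xx, hxE, hxge⟩ := hup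
      have hlow' : mA B θ₀ - ε ≤ MA E θ' := le_trans hxge (le_MA ⟨xx, hxE, rfl⟩)
      have hup' : MA E θ' ≤ mA B θ₀ + ε := by
        obtain ⟨y, hy, hyval⟩ := MA_mem hEcl (hEne θ')
        have := hhigh (θ', y) hy hθ'
        rwa [hyval] at this
      rw [abs_le]; exact ⟨by linarith, by linarith⟩
    have heq : MA E θ₀ = mA B θ₀ := by
      refine eq_of_forall_dist_le fun ε hε => ?_
      obtain ⟨U, hU, hUp⟩ := key ε hε
      have := hUp θ₀ (mem_of_mem_nhds hU)
      rwa [Real.dist_eq]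
    refine ⟨heq, ?_⟩
    rw [ContinuousAt, Metric.tendsto_nhds]
    intro ε hε
    obtain ⟨U, hU, hUp⟩ := key (ε/2) (by linarith)
    filter_upwards [hU] with θ' hθ'
    have := hUp θ' hθ'
    rw [Real.dist_eq, heq]
    linarith [abs_nonneg (MA E θ' - mA B θ₀)]
  -- Part 1: botCover E = A
  have part1 : botCover E = A := by
    apply Subset.antisymm
    · refine closure_minimal ?_ hAcl
      rintro ⟨θ, x⟩ ⟨hc, hval⟩
      have hcθ : ContinuousAt (mA E) θ := hc
      rw [hAeq, mem_closure_iff_nhds]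
      intro T hT
      rw [mem_nhds_prod_iff] at hT
      obtain ⟨U, hU, V, hV, hUV⟩ := hT
      obtain ⟨ε, hε, hball⟩ := Metric.mem_nhds_iff.1 hV
      have hU1 : {θ' | dist (mA E θ') (mA E θ) < ε} ∈ 𝓝 θ :=
        Metric.tendsto_nhds.1 hcθ ε hε
      obtain ⟨θ', hθ'G, hθ'U, hθ'U1⟩ := hGdense.inter_nhds_nonempty (inter_mem hU hU1)
      refine ⟨(θ', φ θ'), hUV ⟨hθ'U, hball ?_⟩, hθ'G.1.1, rfl⟩
      have h1 : MA A θ' = (φ θ' : ℝ) := (hApr θ' hθ'G.1.1).1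
      have h2 : mA E θ' = MA A θ' := (hmE θ' hθ'G).1
      simp only [mem_setOf_eq] at hθ'U1
      rw [Metric.mem_ball, Subtype.dist_eq, Real.dist_eq, ← h1, ← h2, hval]
      rw [Real.dist_eq] at hθ'U1
      exact hθ'U1
    · have h1 : A ⊆ closure {p : Cyl | p.1 ∈ G ∧ p.2 = φ p.1} :=
        hAsub G (fun θ hθ => hθ.1.1) hGdense
      refine h1.trans (closure_mono ?_)
      rintro ⟨θ, x⟩ ⟨hθG, hx⟩
      refine ⟨(hmE θ hθG).2, ?_⟩
      have hx' : x = φ θ := hx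
      rw [hx', (hmE θ hθG).1, (hApr θ hθG.1.1).1]
  -- Part 2: topCover E = B
  have part2 : topCover E = B := by
    apply Subset.antisymm
    · refine closure_minimal ?_ hBcl
      rintro ⟨θ, x⟩ ⟨hc, hval⟩
      have hcθ : ContinuousAt (MA E) θ := hc
      rw [hBeq, mem_closure_iff_nhds]
      intro T hT
      rw [mem_nhds_prod_iff] at hT
      obtain ⟨U, hU, V, hV, hUV⟩ := hT
      obtain ⟨ε, hε, hball⟩ := Metric.mem_nhds_iff.1 hV
      have hU1 : {θ' | dist (MA E θ') (MA E θ) < ε} ∈ 𝓝 θ :=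
        Metric.tendsto_nhds.1 hcθ ε hε
      obtain ⟨θ', hθ'G, hθ'U, hθ'U1⟩ := hGdense.inter_nhds_nonempty (inter_mem hU hU1)
      refine ⟨(θ', ψ θ'), hUV ⟨hθ'U, hball ?_⟩, hθ'G.1.2, rfl⟩
      have h1 : mA B θ' = (ψ θ' : ℝ) := (hBpr θ' hθ'G.1.2).2.1
      have h2 : MA E θ' = mA B θ' := (hME θ' hθ'G).1
      simp only [mem_setOf_eq] at hθ'U1
      rw [Metric.mem_ball, Subtype.dist_eq, Real.dist_eq, ← h1, ← h2, hval]
      rw [Real.dist_eq] at hθ'U1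
      exact hθ'U1
    · have h1 : B ⊆ closure {p : Cyl | p.1 ∈ G ∧ p.2 = ψ p.1} :=
        hBsub G (fun θ hθ => hθ.1.2) hGdense
      refine h1.trans (closure_mono ?_)
      rintro ⟨θ, x⟩ ⟨hθG, hx⟩
      refine ⟨(hME θ hθG).2, ?_⟩
      have hx' : x = ψ θ := hx
      rw [hx', (hME θ hθG).1, (hBpr θ hθG.1.2).2.1]
  exact ⟨part1, part2, fun θ h1 h2 x => hfib θ h1 h2 x⟩

end MainProof
end

section
/- Let A and B be pseudo-curves in Ω with A < B. Then E_AB = closure(interior(E_AB)); in particular, E_AB has non-empty interior. -/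
open Dynamics Set

/-!
Over a point `θ` where both `M_A` and `m_B` are continuous, a point strictly between
`M_A θ` and `m_B θ` has a box neighbourhood `U × (a, b)` with `M_A < a` and `b < m_B` on `U`;
as such `θ` are dense, the whole box lies in `E_AB`. So the set whose closure defines `E_AB`
lies in the interior of `E_AB`. For the closure of the graph of `φ` over a residual `G`,
the entire fibre over `θ` near `θ₀ ∈ G` is close to `φ θ₀`, so `M` and `m` are continuous on `G`;
hence the continuity sets are residual, and meeting them with the residual set where
`M_A < m_B` yields a point of that set.
-/

open Filter Topology

def bandFibers (A B : Set Cyl) : Set Cyl :=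
  {p | p.1 ∈ contPts (MA A) ∧ p.1 ∈ contPts (mA B) ∧ MA A p.1 < (p.2 : ℝ) ∧ (p.2 : ℝ) < mA B p.1}

lemma MA_nonneg (A : Set Cyl) (θ : S1) : 0 ≤ MA A θ :=
  Real.sSup_nonneg (by rintro _ ⟨x, -, rfl⟩; exact x.2.1)

lemma mA_le_one (A : Set Cyl) (θ : S1) : mA A θ ≤ 1 := by
  obtain h | ⟨_, x, hx, rfl⟩ := (Subtype.val '' fiber A θ).eq_empty_or_nonempty
  · rw [mA, h, Real.sInf_empty]
    exact zero_le_one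
  · exact csInf_le_of_le ⟨0, by rintro _ ⟨y, -, rfl⟩; exact y.2.1⟩ ⟨x, hx, rfl⟩ x.2.2

section Fiber

variable {A : Set Cyl} {θ : S1}

lemma dist_MA_le {y ε : ℝ} (hne : (fiber A θ).Nonempty)
    (h : ∀ x ∈ fiber A θ, dist (x : ℝ) y ≤ ε) : dist (MA A θ) y ≤ ε := by
  obtain ⟨x₀, hx₀⟩ := hne
  simp only [Real.dist_eq, abs_sub_le_iff] at h ⊢
  have hbdd : BddAbove (Subtype.val '' fiber A θ) := ⟨1, by rintro _ ⟨x, -, rfl⟩; exact x.2.2⟩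
  have hle : MA A θ ≤ y + ε := csSup_le ⟨x₀, x₀, hx₀, rfl⟩ <| by
    rintro _ ⟨x, hx, rfl⟩
    linarith [(h x hx).1]
  have hge : (x₀ : ℝ) ≤ MA A θ := le_csSup hbdd ⟨x₀, hx₀, rfl⟩
  constructor <;> linarith [(h x₀ hx₀).2]

lemma dist_mA_le {y ε : ℝ} (hne : (fiber A θ).Nonempty)
    (h : ∀ x ∈ fiber A θ, dist (x : ℝ) y ≤ ε) : dist (mA A θ) y ≤ ε := by
  obtain ⟨x₀, hx₀⟩ := hne
  simp only [Real.dist_eq, abs_sub_le_iff] at h ⊢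
  have hbdd : BddBelow (Subtype.val '' fiber A θ) := ⟨0, by rintro _ ⟨x, -, rfl⟩; exact x.2.1⟩
  have hge : y - ε ≤ mA A θ := le_csInf ⟨x₀, x₀, hx₀, rfl⟩ <| by
    rintro _ ⟨x, hx, rfl⟩
    linarith [(h x hx).2]
  have hle : mA A θ ≤ x₀ := csInf_le hbdd ⟨x₀, hx₀, rfl⟩
  constructor <;> linarith [(h x₀ hx₀).1]

end Fiber

section PseudoCurve

variable {G : Set S1} {φ : S1 → II} {θ₀ : S1}

lemma fiber_closure_graphOn_nonempty (hG : Dense G) (φ : S1 → II) (θ : S1) :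
    (fiber (closure (G.graphOn φ)) θ).Nonempty := by
  have hclosed : IsClosed (Prod.fst '' closure (G.graphOn φ)) :=
    (isClosed_closure.isCompact.image continuous_fst).isClosed
  have hG_sub : G ⊆ Prod.fst '' closure (G.graphOn φ) :=
    fun θ hθ => ⟨(θ, φ θ), subset_closure (mem_image_of_mem _ hθ), rfl⟩
  obtain ⟨⟨_, x⟩, hx, rfl⟩ := hclosed.closure_subset_iff.2 hG_sub (hG θ)
  exact ⟨x, hx⟩

lemma eventually_dist_le_of_mem_fiber_closure_graphOn (hφ : ContinuousWithinAt φ G θ₀)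
    {ε : ℝ} (hε : 0 < ε) :
    ∀ᶠ θ in 𝓝 θ₀, ∀ x ∈ fiber (closure (G.graphOn φ)) θ, dist (x : ℝ) (φ θ₀) ≤ ε := by
  obtain ⟨U, hUo, hθ₀U, hU⟩ := mem_nhdsWithin.1 (hφ (Metric.closedBall_mem_nhds (φ θ₀) hε))
  filter_upwards [hUo.mem_nhds hθ₀U] with θ hθ x hx
  have hsub : Prod.fst ⁻¹' U ∩ G.graphOn φ ⊆ Prod.snd ⁻¹' Metric.closedBall (φ θ₀) ε := by
    rintro _ ⟨hθ'U, θ', hθ'G, rfl⟩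
    exact hU ⟨hθ'U, hθ'G⟩
  exact closure_minimal hsub (Metric.isClosed_closedBall.preimage continuous_snd)
    ((hUo.preimage continuous_fst).inter_closure ⟨hθ, hx⟩)

lemma continuousAt_MA_closure_graphOn (hG : Dense G) (hφ : ContinuousWithinAt φ G θ₀) :
    ContinuousAt (MA (closure (G.graphOn φ))) θ₀ := by
  refine continuousAt_of_tendsto_nhds (y := (φ θ₀ : ℝ)) (Metric.tendsto_nhds.2 fun ε hε => ?_)
  filter_upwards [eventually_dist_le_of_mem_fiber_closure_graphOn hφ (half_pos hε)] with θ hθ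
  exact (dist_MA_le (fiber_closure_graphOn_nonempty hG φ θ) hθ).trans_lt (half_lt_self hε)

lemma continuousAt_mA_closure_graphOn (hG : Dense G) (hφ : ContinuousWithinAt φ G θ₀) :
    ContinuousAt (mA (closure (G.graphOn φ))) θ₀ := by
  refine continuousAt_of_tendsto_nhds (y := (φ θ₀ : ℝ)) (Metric.tendsto_nhds.2 fun ε hε => ?_)
  filter_upwards [eventually_dist_le_of_mem_fiber_closure_graphOn hφ (half_pos hε)] with θ hθ
  exact (dist_mA_le (fiber_closure_graphOn_nonempty hG φ θ) hθ).trans_lt (half_lt_self hε)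

lemma IsPseudoCurve.contPts_mem_residual {A : Set Cyl} (hA : IsPseudoCurve A) :
    contPts (MA A) ∈ residual S1 ∧ contPts (mA A) ∈ residual S1 := by
  obtain ⟨G, hG, φ, hφ, rfl⟩ := hA
  have hgraph : {p : Cyl | p.1 ∈ G ∧ p.2 = φ p.1} = G.graphOn φ := by
    ext p
    simp [eq_comm]
  rw [hgraph]
  have hφG : ContinuousOn φ G := continuousOn_iff_continuous_domRestrict.2 hφ
  exact ⟨mem_of_superset hG fun θ hθ =>
      continuousAt_MA_closure_graphOn (dense_of_mem_residual hG) (hφG θ hθ),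
    mem_of_superset hG fun θ hθ =>
      continuousAt_mA_closure_graphOn (dense_of_mem_residual hG) (hφG θ hθ)⟩

end PseudoCurve

section Band

variable {A B : Set Cyl}

lemma bandFibers_subset_interior_bandBetween (hC : Dense (contPts (MA A) ∩ contPts (mA B))) :
    bandFibers A B ⊆ interior (bandBetween A B) := by
  rintro ⟨θ₀, x₀⟩ ⟨hA₀, hB₀, hlo, hhi⟩
  obtain ⟨a, ha, hax⟩ := exists_between hlo
  obtain ⟨b, hxb, hb⟩ := exists_between hhi
  obtain ⟨U, hUsub, hUo, hθ₀U⟩ := mem_nhds_iff.1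
    ((ContinuousAt.eventually_lt hA₀ continuousAt_const ha).and
      (ContinuousAt.eventually_lt continuousAt_const hB₀ hb))
  set V : Set II := Subtype.val ⁻¹' Ioo a b
  have hbox : (U ∩ (contPts (MA A) ∩ contPts (mA B))) ×ˢ V ⊆ bandFibers A B := by
    rintro ⟨θ, x⟩ ⟨⟨hθU, hθA, hθB⟩, hax, hxb⟩
    exact ⟨hθA, hθB, (hUsub hθU).1.trans hax, hxb.trans (hUsub hθU).2⟩
  refine interior_maximal ?_ (hUo.prod (isOpen_Ioo.preimage continuous_subtype_val))
    ⟨hθ₀U, hax, hxb⟩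
  calc U ×ˢ V ⊆ closure (U ∩ (contPts (MA A) ∩ contPts (mA B))) ×ˢ closure V :=
        prod_mono (hC.open_subset_closure_inter hUo) subset_closure
    _ = closure ((U ∩ (contPts (MA A) ∩ contPts (mA B))) ×ˢ V) := closure_prod_eq.symm
    _ ⊆ bandBetween A B := closure_mono hbox

lemma bandBetween_eq_closure_interior (hC : Dense (contPts (MA A) ∩ contPts (mA B))) :
    bandBetween A B = closure (interior (bandBetween A B)) :=
  (closure_mono (bandFibers_subset_interior_bandBetween hC)).antisymm
    (closure_minimal interior_subset isClosed_closure)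

lemma interior_bandBetween_nonempty (hC : contPts (MA A) ∩ contPts (mA B) ∈ residual S1)
    (hAB : stripLT A B) : (interior (bandBetween A B)).Nonempty := by
  obtain ⟨G, hG, hlt⟩ := hAB
  obtain ⟨θ, ⟨hθA, hθB⟩, hθG⟩ := (dense_of_mem_residual (inter_mem hC hG)).nonempty
  have hθ := hlt θ hθG
  let x : II := ⟨(MA A θ + mA B θ) / 2, by
    constructor <;> linarith [MA_nonneg A θ, mA_le_one B θ]⟩
  have hx : (θ, x) ∈ bandFibers A B :=
    ⟨hθA, hθB, show MA A θ < (MA A θ + mA B θ) / 2 by linarith,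
      show (MA A θ + mA B θ) / 2 < mA B θ by linarith⟩
  exact ⟨(θ, x), bandFibers_subset_interior_bandBetween (dense_of_mem_residual hC) hx⟩

end Band

/-- `E_{AB}` is the closure of its interior; in particular its interior is
non-empty. -/
theorem bandBetween_closure_interior (A B : Set Cyl)
    (hA : IsPseudoCurve A) (hB : IsPseudoCurve B) (hAB : stripLT A B) :
    bandBetween A B = closure (interior (bandBetween A B)) ∧
    (interior (bandBetween A B)).Nonempty := by
  have hC : contPts (MA A) ∩ contPts (mA B) ∈ residual S1 :=
    inter_mem hA.contPts_mem_residual.1 hB.contPts_mem_residual.2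
  exact ⟨bandBetween_eq_closure_interior (dense_of_mem_residual hC),
    interior_bandBetween_nonempty hC hAB⟩
end

section
/- Let f : I → I be continuous and let f_P be a P-linear map, where P is a periodic orbit. Let x and y be two distinct periodic points of f_P associated respectively to two distinct loops α and β in the P-signed Markov graph of f_P. Then x < y if and only if α < β in the lexicographic ordering of loops. Consequently, for every n ≥ 1, f_P^n(x) < f_P^n(y) if and only if S^n(α) < S^n(β). -/
open Dynamics Set

/-!
Along the common part of the two itineraries both orbits visit the same basic interval, on
which `f` is affine with slope of the sign of the arrow taken; so the order of `f^i x` and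
`f^i y` is flipped exactly at the negative arrows. At the first place where the itineraries
differ, the two points lie in different basic intervals and are ordered like them.
-/

open Function

section LoopOrder

variable {n : ℕ} {f : II → II} {p : Fin (n + 1) → II}

def basicInterval (p : Fin (n + 1) → II) (k : Fin n) : Set II :=
  Icc (p k.castSucc) (p k.succ)

lemma le_of_mem_basicInterval_of_lt (hp : StrictMono p) {a b : Fin n} {X Y : II}
    (hX : X ∈ basicInterval p a) (hY : Y ∈ basicInterval p b) (hab : a < b) : X ≤ Y :=
  calc X ≤ p a.succ := hX.2
    _ ≤ p b.castSucc := hp.monotone (Fin.succ_le_castSucc_iff.mpr hab)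
    _ ≤ Y := hY.1

lemma lt_iff_lt_of_mem_basicInterval (hp : StrictMono p) {a b : Fin n} {X Y : II}
    (hX : X ∈ basicInterval p a) (hY : Y ∈ basicInterval p b) (hab : a ≠ b) (hXY : X ≠ Y) :
    X < Y ↔ a < b := by
  refine ⟨fun hlt => ?_, fun hlt => (le_of_mem_basicInterval_of_lt hp hX hY hlt).lt_of_ne hXY⟩
  rcases hab.lt_or_gt with h | h
  · exact h
  · exact absurd (le_of_mem_basicInterval_of_lt hp hY hX h) hlt.not_ge

lemma AffineOnIcc.mul_sub_eq {a b : II} (haff : AffineOnIcc f a b) {X Y : II}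
    (hX : X ∈ Icc a b) (hY : Y ∈ Icc a b) :
    ((b : ℝ) - a) * ((f Y : ℝ) - f X) = ((Y : ℝ) - X) * ((f b : ℝ) - f a) := by
  linear_combination haff Y hY.1 hY.2 - haff X hX.1 hX.2

lemma AffineOnIcc.strictMonoOn {a b : II} (haff : AffineOnIcc f a b) (hab : a < b)
    (hf : (f a : ℝ) < f b) : StrictMonoOn f (Icc a b) := by
  intro X hX Y hY hXY
  have key := haff.mul_sub_eq hX hY
  have hpos : 0 < ((Y : ℝ) - X) * ((f b : ℝ) - f a) :=
    mul_pos (sub_pos.mpr hXY) (sub_pos.mpr hf)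
  rw [← key] at hpos
  exact Subtype.coe_lt_coe.mp (sub_pos.mp (pos_of_mul_pos_right hpos (sub_nonneg.mpr hab.le)))

lemma AffineOnIcc.strictAntiOn {a b : II} (haff : AffineOnIcc f a b) (hab : a < b)
    (hf : (f b : ℝ) < f a) : StrictAntiOn f (Icc a b) := by
  intro X hX Y hY hXY
  have key := haff.mul_sub_eq hX hY
  have hneg : ((Y : ℝ) - X) * ((f b : ℝ) - f a) < 0 :=
    mul_neg_of_pos_of_neg (sub_pos.mpr hXY) (sub_neg.mpr hf)
  rw [← key] at hneg
  exact Subtype.coe_lt_coe.mp (sub_neg.mp (neg_of_mul_neg_right hneg (sub_nonneg.mpr hab.le)))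

lemma IArrow.lt_of_true (hp : StrictMono p) {k l : Fin n} (h : IArrow f p true k l) :
    (f (p k.castSucc) : ℝ) < f (p k.succ) := by
  have hl : (p l.castSucc : ℝ) < p l.succ := hp Fin.castSucc_lt_succ
  simp only [IArrow, if_true] at h
  linarith [h.1, h.2]

lemma IArrow.lt_of_false (hp : StrictMono p) {k l : Fin n} (h : IArrow f p false k l) :
    (f (p k.succ) : ℝ) < f (p k.castSucc) := by
  have hl : (p l.castSucc : ℝ) < p l.succ := hp Fin.castSucc_lt_succ
  simp only [IArrow, Bool.false_eq_true, if_false] at h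
  linarith [h.1, h.2]

lemma IArrow.sign_unique (hp : StrictMono p) {σ σ' : Bool} {k l : Fin n}
    (h : IArrow f p σ k l) (h' : IArrow f p σ' k l) : σ = σ' := by
  cases σ <;> cases σ'
  all_goals first
    | rfl
    | exfalso; linarith [h.lt_of_true hp, h'.lt_of_false hp]
    | exfalso; linarith [h.lt_of_false hp, h'.lt_of_true hp]

lemma IArrow.lt_iff (hp : StrictMono p) {σ : Bool} {k l : Fin n}
    (haff : AffineOnIcc f (p k.castSucc) (p k.succ)) (h : IArrow f p σ k l) {X Y : II} (hX : X ∈ basicInterval p k)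
    (hY : Y ∈ basicInterval p k) (hXY : X ≠ Y) :
    f X < f Y ↔ (X < Y ↔ σ = true) := by
  have hk : p k.castSucc < p k.succ := hp Fin.castSucc_lt_succ
  cases σ with
  | true =>
    simpa using (haff.strictMonoOn hk (h.lt_of_true hp)).lt_iff_lt hX hY
  | false =>
    rw [(haff.strictAntiOn hk (h.lt_of_false hp)).lt_iff_gt hX hY, Bool.false_eq_true,
      iff_false, not_lt]
    exact ⟨le_of_lt, fun hle => hle.lt_of_ne hXY.symm⟩

lemma signAt_zero (s : ℕ → Bool) : signAt s 0 = true := by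
  simp [signAt]

lemma signAt_succ (s : ℕ → Bool) (i : ℕ) :
    signAt s (i + 1) = true ↔ (signAt s i = true ↔ s i = true) := by
  simp only [signAt, Finset.range_add_one, Finset.filter_insert, decide_eq_true_eq]
  cases s i with
  | false =>
    rw [if_pos rfl, Finset.card_insert_of_notMem (by simp)]
    simp [Nat.even_add_one]
  | true =>
    rw [if_neg (by simp)]
    simp

lemma seqLT_iff_of_first_ne {v w : ℕ → Fin n} (s : ℕ → Bool) {k : ℕ} (hk : v k ≠ w k)
    (hbefore : ∀ i < k, v i = w i) : seqLT v s w ↔ (v k < w k ↔ signAt s k = true) := by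
  refine ⟨fun ⟨k', hbefore', hk', hlt⟩ => ?_, fun h => ⟨k, hbefore, hk, h⟩⟩
  obtain rfl : k' = k := by
    rcases lt_trichotomy k' k with h | h | h
    · exact absurd (hbefore k' h) hk'
    · exact h
    · exact absurd (hbefore' k h) hk
  exact hlt

theorem lt_iff_seqLT_of_itineraries (hp : StrictMono p)
    (haff : ∀ k : Fin n, AffineOnIcc f (p k.castSucc) (p k.succ))
    {v w : ℕ → Fin n} {s : ℕ → Bool} (harr : ∀ i, IArrow f p (s i) (v i) (v (i + 1)))
    {x y : II} (hxv : ∀ i, f^[i] x ∈ basicInterval p (v i))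
    (hyw : ∀ i, f^[i] y ∈ basicInterval p (w i)) (hne : ∀ i, f^[i] x ≠ f^[i] y)
    (hvw : ∃ i, v i ≠ w i) :
    x < y ↔ seqLT v s w := by
  classical
  set k := Nat.find hvw
  have hbefore : ∀ i < k, v i = w i := fun i hi => not_not.mp (Nat.find_min hvw hi)
  have hinv : ∀ i ≤ k, (x < y ↔ (f^[i] x < f^[i] y ↔ signAt s i = true)) := by
    intro i
    induction i with
    | zero => simp [signAt_zero]
    | succ i ih =>
      intro hik
      have hyv : f^[i] y ∈ basicInterval p (v i) := hbefore i hik ▸ hyw i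
      have hstep := (harr i).lt_iff hp (haff (v i)) (hxv i) hyv (hne i)
      have hprev := ih (Nat.le_of_succ_le hik)
      rw [iterate_succ_apply', iterate_succ_apply', hstep, signAt_succ]
      tauto
  rw [hinv k le_rfl, lt_iff_lt_of_mem_basicInterval hp (hxv k) (hyw k) (Nat.find_spec hvw)
    (hne k), seqLT_iff_of_first_ne s (Nat.find_spec hvw) hbefore]

end LoopOrder

lemma shiftSeq_zero {α : Type} (v : ℕ → α) : shiftSeq v 0 = v :=
  funext fun j => congrArg v (zero_add j)

lemma Function.Periodic.exists_add_ne {α : Type*} {v w : ℕ → α} {a b : ℕ} (ha : 0 < a)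
    (hb : 0 < b) (hv : Periodic v a) (hw : Periodic w b) (h : ∃ i, v i ≠ w i) (N : ℕ) :
    ∃ i, v (N + i) ≠ w (N + i) := by
  obtain ⟨i, hi⟩ := h
  refine ⟨i + N * (a * b) - N, ?_⟩
  have hN : N ≤ N * (a * b) := Nat.le_mul_of_pos_right N (Nat.mul_pos ha hb)
  have hvN := hv.nat_mul (N * b) i
  have hwN := hw.nat_mul (N * a) i
  rw [Nat.cast_id, show N * b * a = N * (a * b) by ring] at hvN
  rw [Nat.cast_id, show N * a * b = N * (a * b) by ring] at hwN
  rwa [show N + (i + N * (a * b) - N) = i + N * (a * b) by omega, hvN, hwN]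

theorem assoc_point_order_iff_loop_order_general {n : ℕ}
    (f : II → II) (p : Fin (n + 1) → II) (hp : StrictMono p)
    (hlin : IsPLinear f p)
    (x y : II) (hxy : x ≠ y)
    (mx my : ℕ) (v w : ℕ → Fin n) (s t : ℕ → Bool)
    (hα : IsILoop f p mx v s) (hβ : IsILoop f p my w t)
    (hx : IAssocPt f p mx x v) (hy : IAssocPt f p my y w)
    (hdist : ∃ i : ℕ, v i ≠ w i ∨ s i ≠ t i) :
    (x < y ↔ seqLT v s w) ∧
    ∀ N : ℕ, 1 ≤ N →
      (f^[N] x < f^[N] y ↔ seqLT (shiftSeq v N) (shiftSeq s N) (shiftSeq w N)) := by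
  have hvw : ∃ i, v i ≠ w i := by
    by_contra! hsame
    obtain ⟨i, hv | hs⟩ := hdist
    · exact hv (hsame i)
    · refine hs ((hα.2.2.2 i).sign_unique hp ?_)
      rw [hsame i, hsame (i + 1)]
      exact hβ.2.2.2 i
  have hne : ∀ i, f^[i] x ≠ f^[i] y := fun i h =>
    hxy ((IsPeriodicPt.iterate hx.1 i).eq_of_apply_eq (IsPeriodicPt.iterate hy.1 i) hα.1 hβ.1 h)
  have hshift : ∀ N, (f^[N] x < f^[N] y ↔
      seqLT (shiftSeq v N) (shiftSeq s N) (shiftSeq w N)) := fun N =>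
    lt_iff_seqLT_of_itineraries hp hlin.2.1 (fun i => hα.2.2.2 (N + i))
      (fun i => by rw [← iterate_add_apply, add_comm i N]; exact hx.2.2 (N + i))
      (fun i => by rw [← iterate_add_apply, add_comm i N]; exact hy.2.2 (N + i))
      (fun i => by rw [← iterate_add_apply, ← iterate_add_apply]; exact hne (i + N))
      (Periodic.exists_add_ne hα.1 hβ.1 hα.2.1 hβ.2.1 hvw N)
  exact ⟨by simpa only [shiftSeq_zero, iterate_zero_apply] using hshift 0, fun N _ => hshift N⟩

/-- the spatial order of periodic points of a `P`-linear map associated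
to distinct loops agrees with the lexicographic order of the loops, and likewise for
all iterates and shifts. -/
theorem assoc_point_order_iff_loop_order {n : ℕ}
    (f : II → II) (p : Fin (n + 1) → II) (hp : StrictMono p)
    (τ : Equiv.Perm (Fin (n + 1))) (hτ : IsCyclicPerm τ)
    (hporb : ∀ i, f (p i) = p (τ i)) (hlin : IsPLinear f p)
    (x y : II) (hxy : x ≠ y)
    (mx my : ℕ) (v w : ℕ → Fin n) (s t : ℕ → Bool)
    (hα : IsILoop f p mx v s) (hβ : IsILoop f p my w t)
    (hx : IAssocPt f p mx x v) (hy : IAssocPt f p my y w)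
    (hdist : ∃ i : ℕ, v i ≠ w i ∨ s i ≠ t i) :
    (x < y ↔ seqLT v s w) ∧
    ∀ N : ℕ, 1 ≤ N →
      (f^[N] x < f^[N] y ↔ seqLT (shiftSeq v N) (shiftSeq s N) (shiftSeq w N)) :=
  assoc_point_order_iff_loop_order_general f p hp hlin x y hxy mx my v w s t hα hβ hx hy hdist
end

section
/- Let τ be an interval pattern and let f_τ = f_P be a P-linear map, where P is a periodic orbit of f_P with pattern τ. If Q = {q_0, q_1, …, q_{n−1}} is a periodic orbit of f_τ with pattern ν ≠ τ, then there exists a unique loop α in the P-signed Markov graph of f_P associated to q_0; moreover, α is simple. -/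
open Dynamics Set

/-!
Since `f` maps `I ∖ [min P, max P]` into `P`, an orbit `Q` sharing no point with `P` lies in the
interiors of the `P`-basic intervals. So the itinerary of `q₀` is forced, and each step
`J_{v i} → J_{v (i+1)}` is an arrow whose sign is the monotonicity of `f` on `J_{v i}`; this gives
existence and uniqueness of the loop.

If the itinerary had a period `d` shorter than the period of `q₀`, then, `f` being affine on
basic intervals, `f^d` would multiply the gaps of the `f^d`-orbit of `q₀` by the product `Λ` of
the slopes along the loop. This orbit closes up, so the geometric sum `∑ Λ^t` vanishes, i.e.
`Λ = -1`. Then every covering of the loop is an equality, `f^d` reverses each interval of the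
loop, and the orbit of the endpoint of `J_{v 0}` nearer to `q₀` is ordered exactly like the orbit
of `q₀`: `Q` would have the pattern of `P`.
-/

open Function

section Patterns

variable {α : Type*} [LinearOrder α] {f : α → α}

theorem IsCyclicPerm.minimalPeriod_eq {m : ℕ} {σ : Equiv.Perm (Fin m)} (hσ : IsCyclicPerm σ)
    (a : Fin m) : minimalPeriod σ a = m := by
  refine le_antisymm ((minimalPeriod_le_card).trans_eq (Fintype.card_fin m)) ?_
  have hpos : 0 < minimalPeriod σ a :=
    minimalPeriod_pos_of_mem_periodicPts (σ.injective.mem_periodicPts a)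
  calc m = (Finset.univ : Finset (Fin m)).card := (Finset.card_fin m).symm
    _ ≤ ((Finset.range (minimalPeriod σ a)).image (σ^[·] a)).card := by
        refine Finset.card_le_card fun b _ => ?_
        obtain ⟨i, rfl⟩ := hσ a b
        rw [Equiv.Perm.coe_pow, ← iterate_mod_minimalPeriod_eq]
        exact Finset.mem_image_of_mem _ (Finset.mem_range.2 (Nat.mod_lt _ hpos))
    _ ≤ minimalPeriod σ a := Finset.card_image_le.trans_eq (Finset.card_range _)

theorem patternEqNat_of_orbit_lt_iff {a b : ℕ} {τ : Equiv.Perm (Fin a)} {ν : Equiv.Perm (Fin b)}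
    (hτ : IsCyclicPerm τ) (hν : IsCyclicPerm ν) (i₀ : Fin a) (j₀ : Fin b)
    (h : ∀ i j : ℕ, (τ ^ i) i₀ < (τ ^ j) i₀ ↔ (ν ^ i) j₀ < (ν ^ j) j₀) :
    PatternEqNat τ ν := by
  have heq : ∀ i j : ℕ, (τ ^ i) i₀ = (τ ^ j) i₀ → (ν ^ i) j₀ = (ν ^ j) j₀ := fun i j hij =>
    le_antisymm (not_lt.1 fun hlt => (h j i).2 hlt |>.ne' hij)
      (not_lt.1 fun hlt => (h i j).2 hlt |>.ne hij)
  choose e he using hτ i₀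
  let φ : Fin a → Fin b := fun c => (ν ^ e c) j₀
  have hφ : ∀ i : ℕ, φ ((τ ^ i) i₀) = (ν ^ i) j₀ := fun i => heq _ _ (he _)
  have hmono : StrictMono φ := fun c c' hcc' => by
    rw [← he c, ← he c'] at hcc'
    exact (h _ _).1 hcc'
  have hsurj : Surjective φ := fun d => by
    obtain ⟨j, rfl⟩ := hν j₀ d
    exact ⟨_, hφ j⟩
  let Φ := hmono.orderIsoOfSurjective φ hsurj
  have hab : a = b := by simpa using Fintype.card_congr Φ.toEquiv
  subst hab
  refine ⟨rfl, fun c d hcd => ?_⟩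
  obtain ⟨i, rfl⟩ := hτ i₀ c
  have hval : ∀ i : ℕ, ((τ ^ i) i₀ : ℕ) = (ν ^ i) j₀ := fun i => by
    rw [← hφ i]
    exact (Fin.coe_orderIso_apply Φ _).symm
  rw [show d = (ν ^ i) j₀ from Fin.ext (hcd.symm.trans (hval i)), ← Equiv.Perm.mul_apply,
    ← Equiv.Perm.mul_apply, ← pow_succ', ← pow_succ', hval]

structure IsOrbitOfPattern {m : ℕ} (f : α → α) (q : Fin m → α) (ν : Equiv.Perm (Fin m)) :
    Prop where
  strictMono : StrictMono q
  isCyclicPerm : IsCyclicPerm ν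
  apply_eq : ∀ i, f (q i) = q (ν i)

namespace IsOrbitOfPattern

variable {m : ℕ} {q : Fin m → α} {ν : Equiv.Perm (Fin m)}

theorem iterate_apply (hq : IsOrbitOfPattern f q ν) (i : ℕ) (a : Fin m) :
    f^[i] (q a) = q ((ν ^ i) a) := by
  rw [Equiv.Perm.coe_pow]
  exact ((Semiconj.iterate_right (fun b => (hq.apply_eq b).symm) i) a).symm

theorem minimalPeriod_eq (hq : IsOrbitOfPattern f q ν) (a : Fin m) :
    minimalPeriod f (q a) = m := by
  rw [← hq.isCyclicPerm.minimalPeriod_eq a, minimalPeriod_eq_minimalPeriod_iff]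
  intro i
  simp only [IsPeriodicPt, IsFixedPt, hq.iterate_apply, hq.strictMono.injective.eq_iff,
    Equiv.Perm.coe_pow]

theorem isPeriodicPt (hq : IsOrbitOfPattern f q ν) (a : Fin m) : IsPeriodicPt f m (q a) :=
  hq.minimalPeriod_eq a ▸ isPeriodicPt_minimalPeriod f (q a)

theorem not_isPeriodicPt (hq : IsOrbitOfPattern f q ν) {i : ℕ} (hi : 0 < i) (him : i < m)
    (a : Fin m) : ¬IsPeriodicPt f i (q a) :=
  not_isPeriodicPt_of_pos_of_lt_minimalPeriod hi.ne' (hq.minimalPeriod_eq a ▸ him)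

theorem patternEqNat_of_apply_eq {k : ℕ} {p : Fin k → α} {τ : Equiv.Perm (Fin k)}
    (hp : IsOrbitOfPattern f p τ) (hq : IsOrbitOfPattern f q ν) {a : Fin m} {b : Fin k}
    (hab : q a = p b) : PatternEqNat τ ν :=
  patternEqNat_of_orbit_lt_iff hp.isCyclicPerm hq.isCyclicPerm b a fun i j => by
    rw [← hp.strictMono.lt_iff_lt, ← hq.strictMono.lt_iff_lt, ← hp.iterate_apply,
      ← hp.iterate_apply, ← hq.iterate_apply, ← hq.iterate_apply, hab]

end IsOrbitOfPattern

end Patterns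

section PLinear

variable {n : ℕ} {f : II → II} {p : Fin (n + 1) → II}

def basicIcc (p : Fin (n + 1) → II) (w : Fin n) : Set II := Icc (p w.castSucc) (p w.succ)

def basicIoo (p : Fin (n + 1) → II) (w : Fin n) : Set II := Ioo (p w.castSucc) (p w.succ)

noncomputable def basicSlope (f : II → II) (p : Fin (n + 1) → II) (w : Fin n) : ℝ :=
  ((f (p w.succ) : ℝ) - f (p w.castSucc)) / ((p w.succ : ℝ) - p w.castSucc)

theorem basicIoo_subset_basicIcc (w : Fin n) : basicIoo p w ⊆ basicIcc p w :=
  Ioo_subset_Icc_self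

theorem left_mem_basicIcc (hp : StrictMono p) (w : Fin n) : p w.castSucc ∈ basicIcc p w :=
  left_mem_Icc.2 (hp.monotone (Fin.castSucc_lt_succ (i := w)).le)

theorem right_mem_basicIcc (hp : StrictMono p) (w : Fin n) : p w.succ ∈ basicIcc p w :=
  right_mem_Icc.2 (hp.monotone (Fin.castSucc_lt_succ (i := w)).le)

theorem StrictMono.succ_sub_castSucc_pos (hp : StrictMono p) (w : Fin n) :
    (0 : ℝ) < (p w.succ : ℝ) - p w.castSucc :=
  sub_pos.2 (hp (Fin.castSucc_lt_succ (i := w)))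

theorem IsPLinear.sub_eq_basicSlope_mul (hlin : IsPLinear f p) (hp : StrictMono p) {w : Fin n}
    {x y : II} (hx : x ∈ basicIcc p w) (hy : y ∈ basicIcc p w) :
    (f x : ℝ) - f y = basicSlope f p w * ((x : ℝ) - y) := by
  have hℓ := (hp.succ_sub_castSucc_pos w).ne'
  have ex := hlin.2.1 w x hx.1 hx.2
  have ey := hlin.2.1 w y hy.1 hy.2
  unfold basicSlope
  field_simp
  linear_combination ex - ey

theorem eq_of_mem_basicIcc_of_mem_basicIoo (hp : StrictMono p) {v w : Fin n} {x : II}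
    (hv : x ∈ basicIcc p v) (hw : x ∈ basicIoo p w) : v = w := by
  rcases lt_trichotomy v w with hvw | rfl | hwv
  · have := hp.monotone (Fin.succ_le_castSucc_iff.2 hvw)
    exact absurd (hv.2.trans this) (not_le.2 hw.1)
  · rfl
  · have := hp.monotone (Fin.succ_le_castSucc_iff.2 hwv)
    exact absurd (this.trans hv.1) (not_le.2 hw.2)

theorem le_castSucc_of_lt_of_mem_basicIoo (hp : StrictMono p) {w : Fin n} {j : Fin (n + 1)}
    {y : II} (hj : p j < y) (hy : y ∈ basicIoo p w) : p j ≤ p w.castSucc :=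
  hp.monotone (Fin.le_castSucc_iff.2 (hp.lt_iff_lt.1 (hj.trans hy.2)))

theorem succ_le_of_lt_of_mem_basicIoo (hp : StrictMono p) {w : Fin n} {j : Fin (n + 1)}
    {y : II} (hj : y < p j) (hy : y ∈ basicIoo p w) : p w.succ ≤ p j :=
  hp.monotone (Fin.castSucc_lt_iff_succ_le.1 (hp.lt_iff_lt.1 (hy.1.trans hj)))

theorem exists_mem_basicIoo {x : II} (h₀ : p 0 < x)
    (hlast : x < p (Fin.last n)) (hx : x ∉ range p) : ∃ w : Fin n, x ∈ basicIoo p w := by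
  classical
  have hex : ∃ i, ∃ h : i < n + 1, x < p ⟨i, h⟩ := ⟨n, n.lt_succ_self, hlast⟩
  obtain ⟨hi, hxi⟩ := Nat.find_spec hex
  set i := Nat.find hex
  have hi₀ : i ≠ 0 := by
    rintro h
    exact absurd hxi (not_lt.2 (by convert h₀.le using 2; exact Fin.ext h))
  refine ⟨⟨i - 1, by omega⟩, lt_of_le_of_ne ?_ fun h => hx ⟨_, h⟩, ?_⟩
  · exact not_lt.1 fun h => Nat.find_min hex (show i - 1 < i by omega) ⟨by omega, h⟩
  · have hsucc : (Fin.succ ⟨i - 1, by omega⟩ : Fin (n + 1)) = ⟨i, hi⟩ :=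
      Fin.ext (by simp only [Fin.succ_mk]; omega)
    exact hsucc ▸ hxi

theorem IsPLinear.strictMonoOn_basicIcc (hlin : IsPLinear f p) (hp : StrictMono p) {w : Fin n}
    (hlt : f (p w.castSucc) < f (p w.succ)) : StrictMonoOn f (basicIcc p w) :=
  fun x hx y hy hxy => by
    have hA : 0 < basicSlope f p w := div_pos (sub_pos.2 hlt) (hp.succ_sub_castSucc_pos w)
    have := mul_pos hA (sub_pos.2 (Subtype.coe_lt_coe.2 hxy))
    exact Subtype.coe_lt_coe.1 (by linarith [hlin.sub_eq_basicSlope_mul hp hy hx])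

theorem IsPLinear.strictAntiOn_basicIcc (hlin : IsPLinear f p) (hp : StrictMono p) {w : Fin n}
    (hlt : f (p w.succ) < f (p w.castSucc)) : StrictAntiOn f (basicIcc p w) :=
  fun x hx y hy hxy => by
    have hA : basicSlope f p w < 0 := div_neg_of_neg_of_pos (sub_neg.2 hlt)
      (hp.succ_sub_castSucc_pos w)
    have := mul_neg_of_neg_of_pos hA (sub_pos.2 (Subtype.coe_lt_coe.2 hxy))
    exact Subtype.coe_lt_coe.1 (by linarith [hlin.sub_eq_basicSlope_mul hp hy hx])

noncomputable def arrowSign (f : II → II) (p : Fin (n + 1) → II) (w : Fin n) : Bool :=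
  decide (f (p w.castSucc) < f (p w.succ))

theorem iArrow_of_mem_basicIoo (hlin : IsPLinear f p) (hp : StrictMono p) {w w' : Fin n}
    (hL : f (p w.castSucc) ∈ range p) (hR : f (p w.succ) ∈ range p)
    (hLR : f (p w.castSucc) ≠ f (p w.succ)) {x : II} (hx : x ∈ basicIoo p w)
    (hfx : f x ∈ basicIoo p w') : IArrow f p (arrowSign f p w) w w' := by
  obtain ⟨j, hj⟩ := hL
  obtain ⟨j', hj'⟩ := hR
  have hxL := left_mem_basicIcc hp w
  have hxR := right_mem_basicIcc hp w
  have hxI := basicIoo_subset_basicIcc w hx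
  rcases hLR.lt_or_gt with hlt | hgt
  · have h₁ := hlin.strictMonoOn_basicIcc hp hlt hxL hxI hx.1
    have h₂ := hlin.strictMonoOn_basicIcc hp hlt hxI hxR hx.2
    rw [arrowSign, decide_eq_true hlt]
    simp only [IArrow, if_true, Subtype.coe_le_coe]
    rw [← hj] at h₁ ⊢
    rw [← hj'] at h₂ ⊢
    exact ⟨le_castSucc_of_lt_of_mem_basicIoo hp h₁ hfx, succ_le_of_lt_of_mem_basicIoo hp h₂ hfx⟩
  · have h₁ := hlin.strictAntiOn_basicIcc hp hgt hxL hxI hx.1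
    have h₂ := hlin.strictAntiOn_basicIcc hp hgt hxI hxR hx.2
    rw [arrowSign, decide_eq_false hgt.not_gt]
    simp only [IArrow, Bool.false_eq_true, if_false, Subtype.coe_le_coe]
    rw [← hj] at h₁ ⊢
    rw [← hj'] at h₂ ⊢
    exact ⟨le_castSucc_of_lt_of_mem_basicIoo hp h₂ hfx, succ_le_of_lt_of_mem_basicIoo hp h₁ hfx⟩

theorem IArrow.sign_eq (hp : StrictMono p) {w w' : Fin n} {s s' : Bool}
    (h : IArrow f p s w w') (h' : IArrow f p s' w w') : s' = s := by
  have := hp.succ_sub_castSucc_pos w'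
  cases s <;> cases s' <;> simp only [IArrow, if_true, Bool.false_eq_true, if_false] at h h' <;>
    first | rfl | linarith [h.1, h.2, h'.1, h'.2]

theorem IArrow.length_le {w w' : Fin n} {s : Bool} (h : IArrow f p s w w') :
    (p w'.succ : ℝ) - p w'.castSucc ≤ |(f (p w.succ) : ℝ) - f (p w.castSucc)| := by
  cases s <;> simp only [IArrow, if_true, Bool.false_eq_true, if_false] at h
  · linarith [neg_abs_le ((f (p w.succ) : ℝ) - f (p w.castSucc))]
  · linarith [le_abs_self ((f (p w.succ) : ℝ) - f (p w.castSucc))]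

def IsEndpointPair (p : Fin (n + 1) → II) (w : Fin n) (a b : II) : Prop :=
  (a = p w.castSucc ∧ b = p w.succ) ∨ (a = p w.succ ∧ b = p w.castSucc)

theorem IArrow.isEndpointPair (hp : StrictMono p) {w w' : Fin n} {s : Bool}
    (h : IArrow f p s w w')
    (hlen : (p w'.succ : ℝ) - p w'.castSucc = |(f (p w.succ) : ℝ) - f (p w.castSucc)|) :
    IsEndpointPair p w' (f (p w.castSucc)) (f (p w.succ)) := by
  have := hp.succ_sub_castSucc_pos w'
  cases s <;> simp only [IArrow, if_true, Bool.false_eq_true, if_false] at h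
  · rw [abs_of_nonpos (by linarith)] at hlen
    exact Or.inr ⟨Subtype.ext (by linarith), Subtype.ext (by linarith)⟩
  · rw [abs_of_nonneg (by linarith)] at hlen
    exact Or.inl ⟨Subtype.ext (by linarith), Subtype.ext (by linarith)⟩

namespace IsEndpointPair

variable {w : Fin n} {a b : II}

theorem swap (h : IsEndpointPair p w a b) : IsEndpointPair p w b a :=
  h.symm.imp And.symm And.symm

theorem eq_or_eq {a' b' : II} (h : IsEndpointPair p w a b) (h' : IsEndpointPair p w a' b') :
    (a' = a ∧ b' = b) ∨ (a' = b ∧ b' = a) := by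
  rcases h with ⟨rfl, rfl⟩ | ⟨rfl, rfl⟩ <;> rcases h' with ⟨rfl, rfl⟩ | ⟨rfl, rfl⟩ <;> simp

theorem left_mem (hp : StrictMono p) (h : IsEndpointPair p w a b) : a ∈ basicIcc p w := by
  rcases h with ⟨rfl, -⟩ | ⟨rfl, -⟩
  exacts [left_mem_basicIcc hp w, right_mem_basicIcc hp w]

theorem right_mem (hp : StrictMono p) (h : IsEndpointPair p w a b) : b ∈ basicIcc p w :=
  h.swap.left_mem hp

theorem map {w' : Fin n} (h : IsEndpointPair p w a b)
    (hf : IsEndpointPair p w' (f (p w.castSucc)) (f (p w.succ))) :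
    IsEndpointPair p w' (f a) (f b) := by
  rcases h with ⟨rfl, rfl⟩ | ⟨rfl, rfl⟩
  exacts [hf, hf.swap]

end IsEndpointPair

end PLinear

section Itinerary

variable {n m : ℕ} {f : II → II} {p : Fin (n + 1) → II} {τ : Equiv.Perm (Fin (n + 1))}
  {q : Fin m → II} {ν : Equiv.Perm (Fin m)}

theorem IsPLinear.mem_Ioo_of_isOrbitOfPattern (hlin : IsPLinear f p)
    (hP : IsOrbitOfPattern f p τ) (hQ : IsOrbitOfPattern f q ν) (hdisj : ∀ a b, q a ≠ p b)
    (a : Fin m) : q a ∈ Ioo (p 0) (p (Fin.last n)) := by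
  refine ⟨lt_of_not_ge fun h => ?_, lt_of_not_ge fun h => ?_⟩
  · exact hdisj (ν a) (τ 0) (by rw [← hQ.apply_eq, ← hP.apply_eq, hlin.2.2.1 _ h])
  · exact hdisj (ν a) (τ (Fin.last n)) (by rw [← hQ.apply_eq, ← hP.apply_eq, hlin.2.2.2 _ h])

theorem IsPLinear.exists_itinerary (hlin : IsPLinear f p) (hP : IsOrbitOfPattern f p τ)
    (hQ : IsOrbitOfPattern f q ν) (hdisj : ∀ a b, q a ≠ p b) (a : Fin m) :
    ∃ v : ℕ → Fin n, ∀ i, f^[i] (q a) ∈ basicIoo p (v i) := by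
  have h : ∀ i, ∃ w, f^[i] (q a) ∈ basicIoo p w := fun i => by
    rw [hQ.iterate_apply]
    obtain ⟨h₀, h₁⟩ := hlin.mem_Ioo_of_isOrbitOfPattern hP hQ hdisj ((ν ^ i) a)
    exact exists_mem_basicIoo h₀ h₁ fun ⟨b, hb⟩ => hdisj _ b hb.symm
  choose v hv using h
  exact ⟨v, hv⟩

theorem eq_of_itinerary (hp : StrictMono p) {x : II} {v v' : ℕ → Fin n}
    (hv : ∀ i, f^[i] x ∈ basicIoo p (v i)) (hv' : ∀ i, f^[i] x ∈ basicIcc p (v' i)) : v' = v :=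
  funext fun i => eq_of_mem_basicIcc_of_mem_basicIoo hp (hv' i) (hv i)

theorem periodic_of_itinerary (hp : StrictMono p) {x : II} {v : ℕ → Fin n}
    (hv : ∀ i, f^[i] x ∈ basicIoo p (v i)) (hx : IsPeriodicPt f m x) : Periodic v m := fun i =>
  eq_of_mem_basicIcc_of_mem_basicIoo hp (basicIoo_subset_basicIcc _ (hv (i + m)))
    (by rw [iterate_add_apply, hx.eq]; exact hv i)

theorem IsPLinear.iArrow_of_itinerary (hlin : IsPLinear f p) (hP : IsOrbitOfPattern f p τ)
    {x : II} {v : ℕ → Fin n} (hv : ∀ i, f^[i] x ∈ basicIoo p (v i)) (i : ℕ) :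
    IArrow f p (arrowSign f p (v i)) (v i) (v (i + 1)) := by
  refine iArrow_of_mem_basicIoo hlin hP.strictMono ⟨_, (hP.apply_eq _).symm⟩
    ⟨_, (hP.apply_eq _).symm⟩ ?_ (hv i) (by rw [← iterate_succ_apply' f]; exact hv (i + 1))
  rw [hP.apply_eq, hP.apply_eq]
  exact hP.strictMono.injective.ne (τ.injective.ne Fin.castSucc_lt_succ.ne)

end Itinerary

theorem eq_mul_of_le_mul_of_prod_eq_one {ℓ a : ℕ → ℝ} {d : ℕ} (hℓ : ∀ i, 0 < ℓ i)
    (hle : ∀ i, ℓ (i + 1) ≤ a i * ℓ i) (hd : ℓ d = ℓ 0)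
    (hprod : ∏ i ∈ Finset.range d, a i = 1) {i : ℕ} (hi : i < d) : ℓ (i + 1) = a i * ℓ i := by
  by_contra hne
  have hlt : ∏ j ∈ Finset.range d, ℓ (j + 1) < ∏ j ∈ Finset.range d, (a j * ℓ j) :=
    Finset.prod_lt_prod (fun j _ => hℓ _) (fun j _ => hle j)
      ⟨i, Finset.mem_range.2 hi, lt_of_le_of_ne (hle i) hne⟩
  have hshift : ∏ j ∈ Finset.range d, ℓ (j + 1) = ∏ j ∈ Finset.range d, ℓ j := by
    have h := (Finset.prod_range_succ' ℓ d).symm.trans (Finset.prod_range_succ ℓ d)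
    rwa [hd, mul_left_inj' (hℓ 0).ne'] at h
  rw [Finset.prod_mul_distrib, hprod, one_mul, hshift] at hlt
  exact hlt.false

section Rigidity

variable {n : ℕ} {f : II → II} {p : Fin (n + 1) → II}

theorem basicSlope_mul (hp : StrictMono p) (w : Fin n) :
    basicSlope f p w * ((p w.succ : ℝ) - p w.castSucc) = (f (p w.succ) : ℝ) - f (p w.castSucc) :=
  div_mul_cancel₀ _ (hp.succ_sub_castSucc_pos w).ne'

theorem IsPLinear.iterate_sub_iterate (hlin : IsPLinear f p) (hp : StrictMono p)
    {v : ℕ → Fin n} {x y : II} (hx : ∀ i, f^[i] x ∈ basicIcc p (v i))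
    (hy : ∀ i, f^[i] y ∈ basicIcc p (v i)) (j : ℕ) :
    (f^[j] x : ℝ) - f^[j] y = (∏ i ∈ Finset.range j, basicSlope f p (v i)) * ((x : ℝ) - y) := by
  induction j with
  | zero => simp
  | succ j ih =>
    rw [iterate_succ_apply', iterate_succ_apply', hlin.sub_eq_basicSlope_mul hp (hx j) (hy j), ih,
      Finset.prod_range_succ]
    ring

theorem IsPLinear.prod_basicSlope_eq_neg_one (hlin : IsPLinear f p) (hp : StrictMono p)
    {v : ℕ → Fin n} {x : II} (hv : ∀ i, f^[i] x ∈ basicIcc p (v i)) {d m : ℕ}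
    (hvd : Periodic v d) (hm : 0 < m) (hxm : IsPeriodicPt f m x) (hxd : f^[d] x ≠ x) :
    ∏ i ∈ Finset.range d, basicSlope f p (v i) = -1 := by
  set Λ := ∏ i ∈ Finset.range d, basicSlope f p (v i)
  set y : ℕ → ℝ := fun t => f^[t * d] x
  have hvt : ∀ t i, f^[i] (f^[t * d] x) ∈ basicIcc p (v i) := fun t i => by
    rw [← iterate_add_apply, ← (hvd.nat_mul t) i]
    exact hv _
  have hstep : ∀ t, y (t + 1 + 1) - y (t + 1) = Λ * (y (t + 1) - y t) := fun t => by
    have h := hlin.iterate_sub_iterate hp (hvt (t + 1)) (hvt t) d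
    rwa [← iterate_add_apply, ← iterate_add_apply, show d + (t + 1) * d = (t + 1 + 1) * d by ring,
      show d + t * d = (t + 1) * d by ring] at h
  have hgeom : ∀ t, y (t + 1) - y t = Λ ^ t * (y 1 - y 0) := fun t => by
    induction t with
    | zero => simp
    | succ t ih => rw [hstep, ih, pow_succ]; ring
  have hsum : (∑ t ∈ Finset.range m, Λ ^ t) * (y 1 - y 0) = 0 := by
    rw [Finset.sum_mul, ← Finset.sum_congr rfl fun t _ => hgeom t, Finset.sum_range_sub]
    simp [y, (hxm.mul_const d).eq]
  have hy : y 1 - y 0 ≠ 0 := by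
    simpa [y, sub_eq_zero] using fun h => hxd (Subtype.ext h)
  exact ((geom_sum_eq_zero_iff_neg_one hm.ne').1 ((mul_eq_zero.1 hsum).resolve_right hy)).1

/-- A covering `f(J) ⊇ J'` stretches lengths by at most the slope of `f` on `J`; the slopes along
a period multiply to `-1`, so no covering of the loop stretches, and each is an equality. -/
theorem isEndpointPair_of_prod_basicSlope_eq_neg_one (hp : StrictMono p) {v : ℕ → Fin n}
    {s : ℕ → Bool} (harrow : ∀ i, IArrow f p (s i) (v i) (v (i + 1))) {d : ℕ} (hd : 0 < d)
    (hvd : Periodic v d) (hΛ : ∏ i ∈ Finset.range d, basicSlope f p (v i) = -1) (i : ℕ) :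
    IsEndpointPair p (v (i + 1)) (f (p (v i).castSucc)) (f (p (v i).succ)) := by
  set ℓ : ℕ → ℝ := fun j => (p (v j).succ : ℝ) - p (v j).castSucc
  have hmul : ∀ j, |(f (p (v j).succ) : ℝ) - f (p (v j).castSucc)| =
      |basicSlope f p (v j)| * ℓ j := fun j => by
    rw [← basicSlope_mul hp, abs_mul, abs_of_pos (hp.succ_sub_castSucc_pos _)]
  have heq := eq_mul_of_le_mul_of_prod_eq_one (fun j => hp.succ_sub_castSucc_pos (v j))
    (fun j => (hmul j) ▸ (harrow j).length_le) (by simp only [← hvd 0, zero_add])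
    (by rw [← Finset.abs_prod, hΛ, abs_neg, abs_one]) (Nat.mod_lt i hd)
  have hv₁ : v (i % d + 1) = v (i + 1) := by
    rw [← hvd.map_mod_nat, Nat.mod_add_mod, hvd.map_mod_nat]
  rw [hvd.map_mod_nat, hv₁] at heq
  exact (harrow i).isEndpointPair hp ((hmul i).symm ▸ heq)

def TracksEndpoints (f : II → II) (p : Fin (n + 1) → II) (v : ℕ → Fin n) (a b x : II) (θ : ℝ) :
    Prop :=
  ∀ i, IsEndpointPair p (v i) (f^[i] a) (f^[i] b) ∧
    (f^[i] x : ℝ) = f^[i] a + θ * ((f^[i] b : ℝ) - f^[i] a)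

theorem IsPLinear.tracksEndpoints (hlin : IsPLinear f p) (hp : StrictMono p) {v : ℕ → Fin n}
    (hexact : ∀ i, IsEndpointPair p (v (i + 1)) (f (p (v i).castSucc)) (f (p (v i).succ)))
    {a b x : II} {θ : ℝ} (hab : IsEndpointPair p (v 0) a b)
    (hx : ∀ i, f^[i] x ∈ basicIcc p (v i)) (hθ : (x : ℝ) = a + θ * (b - a)) :
    TracksEndpoints f p v a b x θ := by
  intro i
  induction i with
  | zero => exact ⟨hab, hθ⟩
  | succ i ih =>
    obtain ⟨hpair, hpos⟩ := ih
    simp only [iterate_succ_apply']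
    refine ⟨hpair.map (hexact i), ?_⟩
    have hxa := hlin.sub_eq_basicSlope_mul hp (hx i) (hpair.left_mem hp)
    have hba := hlin.sub_eq_basicSlope_mul hp (hpair.right_mem hp) (hpair.left_mem hp)
    linear_combination hxa - θ * hba + basicSlope f p (v i) * hpos

namespace TracksEndpoints

variable {v : ℕ → Fin n} {a b x : II} {θ : ℝ}

theorem iterate_swap (h : TracksEndpoints f p v a b x θ) {d : ℕ} (hvd : v d = v 0)
    (hxd : f^[d] x ≠ x) : f^[d] a = b ∧ f^[d] b = a := by
  obtain ⟨hab, hx⟩ := h 0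
  rcases hab.eq_or_eq (hvd ▸ (h d).1) with ⟨ha, hb⟩ | hswap
  · exact absurd (Subtype.ext (by rw [(h d).2, ha, hb, ← hx]; rfl)) hxd
  · exact hswap

theorem lt_and_lt_of_lt (h : TracksEndpoints f p v a b x θ) (hp : StrictMono p)
    (hx : ∀ i, f^[i] x ∈ basicIoo p (v i)) {d : ℕ} (hswap : f^[d] a = b) {i j : ℕ}
    (hij : v i < v j) : f^[i] a < f^[j] a ∧ f^[i] x < f^[j] x := by
  have hsep : p (v i).succ ≤ p (v j).castSucc := hp.monotone (Fin.succ_le_castSucc_iff.2 hij)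
  refine ⟨lt_of_le_of_ne (((h i).1.left_mem hp).2.trans (hsep.trans ((h j).1.left_mem hp).1))
    fun heq => ?_, (hx i).2.trans (hsep.trans_lt (hx j).1)⟩
  have hb : ∀ l, f^[l] b = f^[d] (f^[l] a) := fun l => by
    rw [← hswap, ← iterate_add_apply, ← iterate_add_apply, add_comm]
  -- `f^d` swaps the endpoints of every interval of the loop, so `J_{v i}` and `J_{v j}` cannot
  -- share the endpoint `f^i a = f^j a`.
  have hbeq : f^[i] b = f^[j] b := by rw [hb, hb, heq]
  have hi := hp (Fin.castSucc_lt_succ (i := v i))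
  have hj := hp (Fin.castSucc_lt_succ (i := v j))
  rcases (h i).1 with ⟨hai, hbi⟩ | ⟨hai, hbi⟩ <;> rcases (h j).1 with ⟨haj, hbj⟩ | ⟨haj, hbj⟩ <;>
    rw [hai, haj] at heq <;> rw [hbi, hbj] at hbeq <;> order

theorem iterate_lt_iff (h : TracksEndpoints f p v a b x θ) (hp : StrictMono p)
    (hx : ∀ i, f^[i] x ∈ basicIoo p (v i)) {d : ℕ} (hswap : f^[d] a = b) (hθ : θ < 1 / 2)
    (i j : ℕ) : f^[i] a < f^[j] a ↔ f^[i] x < f^[j] x := by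
  rcases lt_trichotomy (v i) (v j) with hij | hij | hij
  · exact iff_of_true (h.lt_and_lt_of_lt hp hx hswap hij).1 (h.lt_and_lt_of_lt hp hx hswap hij).2
  · rcases (h i).1.eq_or_eq (hij ▸ (h j).1) with ⟨ha, hb⟩ | ⟨ha, hb⟩
    · have hxij : f^[j] x = f^[i] x := Subtype.ext (by rw [(h j).2, (h i).2, ha, hb])
      rw [ha, hxij]
      exact iff_of_false (lt_irrefl _) (lt_irrefl _)
    · have hdiff : (f^[j] x : ℝ) - f^[i] x = (1 - 2 * θ) * ((f^[j] a : ℝ) - f^[i] a) := by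
        rw [(h j).2, (h i).2, hb, ha]
        ring
      rw [← Subtype.coe_lt_coe, ← Subtype.coe_lt_coe, ← sub_pos, ← sub_pos (a := (f^[j] x : ℝ)),
        hdiff, mul_pos_iff_of_pos_left (by linarith)]
  · exact iff_of_false (h.lt_and_lt_of_lt hp hx hswap hij).1.asymm
      (h.lt_and_lt_of_lt hp hx hswap hij).2.asymm

theorem patternEqNat {m : ℕ} {τ : Equiv.Perm (Fin (n + 1))} {q : Fin m → II}
    {ν : Equiv.Perm (Fin m)} (hP : IsOrbitOfPattern f p τ) (hQ : IsOrbitOfPattern f q ν)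
    {e : Fin (n + 1)} {c : Fin m} (h : TracksEndpoints f p v (p e) b (q c) θ)
    (hv : ∀ i, f^[i] (q c) ∈ basicIoo p (v i)) {d : ℕ} (hswap : f^[d] (p e) = b)
    (hθ : θ < 1 / 2) : PatternEqNat τ ν :=
  patternEqNat_of_orbit_lt_iff hP.isCyclicPerm hQ.isCyclicPerm e c fun i j => by
    rw [← hP.strictMono.lt_iff_lt, ← hQ.strictMono.lt_iff_lt, ← hP.iterate_apply,
      ← hP.iterate_apply, ← hQ.iterate_apply, ← hQ.iterate_apply]
    exact h.iterate_lt_iff hP.strictMono hv hswap hθ i j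

end TracksEndpoints

theorem IsPLinear.patternEqNat_of_itinerary_periodic {m : ℕ} {τ : Equiv.Perm (Fin (n + 1))}
    {q : Fin m → II} {ν : Equiv.Perm (Fin m)} (hlin : IsPLinear f p)
    (hP : IsOrbitOfPattern f p τ) (hQ : IsOrbitOfPattern f q ν) {c : Fin m} {v : ℕ → Fin n}
    (hv : ∀ i, f^[i] (q c) ∈ basicIoo p (v i)) {d : ℕ} (hd : 0 < d) (hdm : d < m)
    (hvd : Periodic v d) : PatternEqNat τ ν := by
  set x := q c
  have hp := hP.strictMono
  have hvI : ∀ i, f^[i] x ∈ basicIcc p (v i) := fun i => basicIoo_subset_basicIcc _ (hv i)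
  have hxd : f^[d] x ≠ x := hQ.not_isPeriodicPt hd hdm c
  have hexact := isEndpointPair_of_prod_basicSlope_eq_neg_one hp
    (hlin.iArrow_of_itinerary hP hv) hd hvd
    (hlin.prod_basicSlope_eq_neg_one hp hvI hvd (hd.trans hdm) (hQ.isPeriodicPt c) hxd)
  set L := p (v 0).castSucc
  set R := p (v 0).succ
  have hLR : (R : ℝ) - L ≠ 0 := (hp.succ_sub_castSucc_pos (v 0)).ne'
  obtain ⟨θ, hpos⟩ : ∃ θ : ℝ, (x : ℝ) = L + θ * (R - L) :=
    ⟨((x : ℝ) - L) / (R - L), by rw [div_mul_cancel₀ _ hLR]; ring⟩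
  have hpair : IsEndpointPair p (v 0) L R := Or.inl ⟨rfl, rfl⟩
  have htrack := hlin.tracksEndpoints hp hexact hpair hvI hpos
  obtain ⟨hL, hR⟩ := htrack.iterate_swap (by simpa using hvd 0) hxd
  have hhalf : θ ≠ 1 / 2 := fun hθ => hxd <| Subtype.ext <| by
    rw [(htrack d).2, hL, hR, hpos, hθ]
    ring
  rcases hhalf.lt_or_gt with hθ | hθ
  · exact htrack.patternEqNat hP hQ hv hL hθ
  · have htrack' := hlin.tracksEndpoints hp hexact hpair.swap hvI (θ := 1 - θ) (by rw [hpos]; ring)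
    exact htrack'.patternEqNat hP hQ hv hR (by linarith)

end Rigidity

/-- existence, uniqueness and simplicity of the loop associated to a
periodic orbit of a `P`-linear map whose pattern differs from that of `P`. -/
theorem unique_simple_assoc_loop {n k : ℕ}
    (f : II → II) (p : Fin (n + 1) → II) (hp : StrictMono p)
    (τ : Equiv.Perm (Fin (n + 1))) (hτ : IsCyclicPerm τ)
    (hporb : ∀ i, f (p i) = p (τ i)) (hlin : IsPLinear f p)
    (q : Fin (k + 1) → II) (hq : StrictMono q)
    (ν : Equiv.Perm (Fin (k + 1))) (hν : IsCyclicPerm ν)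
    (hqorb : ∀ i, f (q i) = q (ν i))
    (hne : ¬ PatternEqNat τ ν) :
    ∃ (v : ℕ → Fin n) (s : ℕ → Bool),
      IsILoop f p (k + 1) v s ∧ IAssocPt f p (k + 1) (q 0) v ∧
      SimpleLoop (k + 1) v s ∧
      ∀ (v' : ℕ → Fin n) (s' : ℕ → Bool),
        IsILoop f p (k + 1) v' s' → IAssocPt f p (k + 1) (q 0) v' →
        ∀ i, v' i = v i ∧ s' i = s i := by
  have hP : IsOrbitOfPattern f p τ := ⟨hp, hτ, hporb⟩
  have hQ : IsOrbitOfPattern f q ν := ⟨hq, hν, hqorb⟩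
  have hdisj : ∀ a b, q a ≠ p b := fun _ _ h => hne (hP.patternEqNat_of_apply_eq hQ h)
  obtain ⟨v, hv⟩ := hlin.exists_itinerary hP hQ hdisj 0
  have hvper := periodic_of_itinerary hp hv (hQ.isPeriodicPt 0)
  have harrow := hlin.iArrow_of_itinerary hP hv
  refine ⟨v, fun i => arrowSign f p (v i),
    ⟨k.succ_pos, hvper, fun i => congrArg (arrowSign f p) (hvper i), harrow⟩,
    ⟨hQ.isPeriodicPt 0, fun i hi hik => hQ.not_isPeriodicPt hi hik 0,
      fun i => basicIoo_subset_basicIcc _ (hv i)⟩, ?_, ?_⟩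
  · rintro ⟨d, hd, hdk, -, hvd, -⟩
    exact hne (hlin.patternEqNat_of_itinerary_periodic hP hQ hv hd hdk hvd)
  · intro v' s' hloop hassoc i
    obtain rfl := eq_of_itinerary hp hv hassoc.2.2
    exact ⟨rfl, (harrow i).sign_eq hp (hloop.2.2.2 i)⟩
end
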